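/- arXiv:1605.04059 — 5 statements merged into one kernel-verified Lean document; each statement's English description precedes it below -/
import Mathlib

section
/- Let S ≥ 1 be a fixed integer, and let (p_n)_{n∈ℕ} be a sequence of integers with p_n ≥ 3S. For each n, let Σ_n be a positive semidefinite p_n × p_n real matrix and let T₀⁽ⁿ⁾ ⊆ {1,…,p_n} be an index set with |T₀⁽ⁿ⁾| = S. If liminf_{n→∞} (1 − δ_{2S}(Σ_n) − θ_{S,2S}(Σ_n)) > 0, then liminf_{n→∞} φ_{2S}(T₀⁽ⁿ⁾; Σ_n) > 0. -/
/-!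
Fix `n` and constants `δ > δ_{2S}(Σ)`, `θ > θ_{S,2S}(Σ)` satisfying the restricted isometry and
orthogonality inequalities. Given `h ∈ D_{T₀,T}`, enlarge `T` to `T'` with `|T'| = 2S` by adding
the largest remaining entries of `h`; then every entry of `h` off `T'` is at most the average of
`|h|` over `T' \ T₀`. Cutting `h_{T'ᶜ}` into blocks of `S` decreasing entries (the shifting
inequality) and using the cone condition gives `|h_{T'}ᵀ Σ h_{T'ᶜ}| ≤ θ ‖h_{T'}‖₂²`, and testing
`hᵀΣh` against `h_{T'}` by Cauchy–Schwarz yields `(1 - δ - θ) ‖h_T‖₂ ≤ √(1 + δ) (hᵀΣh)^{1/2}`.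
Thus `φ_{2S}(T₀; Σ) ≥ (1 - δ - θ) / √(1 + δ)`, which stays bounded away from `0` once
`1 - δ_{2S} - θ_{S,2S} ≥ c > 0`.
-/

open Matrix Finset

open Matrix Finset

noncomputable def l1 {p : ℕ} (h : Fin p → ℝ) : ℝ := ∑ j, |h j|
noncomputable def l2 {p : ℕ} (h : Fin p → ℝ) : ℝ := Real.sqrt (∑ j, (h j) ^ 2)
noncomputable def lqNorm {p : ℕ} (q : ℝ) (h : Fin p → ℝ) : ℝ := (∑ j, |h j| ^ q) ^ (1 / q)
noncomputable def linf {p : ℕ} (h : Fin p → ℝ) : ℝ := ⨆ j, |h j|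
def restr {p : ℕ} (T : Finset (Fin p)) (h : Fin p → ℝ) : Fin p → ℝ :=
  fun j => if j ∈ T then h j else 0
def coneC {p : ℕ} (T : Finset (Fin p)) (h : Fin p → ℝ) : Prop :=
  l1 (restr Tᶜ h) ≤ l1 (restr T h)
noncomputable def quad {p : ℕ} (M : Matrix (Fin p) (Fin p) ℝ) (h : Fin p → ℝ) : ℝ :=
  h ⬝ᵥ M.mulVec h

/-- Compatibility factor `κ(T₀; M) = inf_{0 ≠ h ∈ C_{T₀}} √|T₀| (hᵀMh)^{1/2} / ‖h_{T₀}‖₁`. -/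
noncomputable def kappa {p : ℕ} (T0 : Finset (Fin p)) (M : Matrix (Fin p) (Fin p) ℝ) : ℝ :=
  sInf {x | ∃ h : Fin p → ℝ, h ≠ 0 ∧ coneC T0 h ∧
    x = Real.sqrt (T0.card) * Real.sqrt (quad M h) / l1 (restr T0 h)}

/-- Restricted eigenvalue `RE(T₀; M) = inf_{0 ≠ h ∈ C_{T₀}} (hᵀMh)^{1/2} / ‖h‖₂`. -/
noncomputable def RE {p : ℕ} (T0 : Finset (Fin p)) (M : Matrix (Fin p) (Fin p) ℝ) : ℝ :=
  sInf {x | ∃ h : Fin p → ℝ, h ≠ 0 ∧ coneC T0 h ∧ x = Real.sqrt (quad M h) / l2 h}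

/-- Weak cone invertibility factor
`F_q(T₀; M) = inf_{0 ≠ h ∈ C_{T₀}} |T₀|^{1/q} (hᵀMh) / (‖h_{T₀}‖₁ ‖h‖_q)`. -/
noncomputable def Fq {p : ℕ} (q : ℝ) (T0 : Finset (Fin p)) (M : Matrix (Fin p) (Fin p) ℝ) : ℝ :=
  sInf {x | ∃ h : Fin p → ℝ, h ≠ 0 ∧ coneC T0 h ∧
    x = (T0.card : ℝ) ^ (1 / q) * quad M h / (l1 (restr T0 h) * lqNorm q h)}

/-- The factor `φ_{2S}(T₀; M)`, an infimum over supersets `T ⊇ T₀` with `|T| ≤ 2S` and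
nonzero `h ∈ D_{T₀,T}` of `(hᵀMh)^{1/2}/‖h_T‖₂`. -/
noncomputable def phi2S {p : ℕ} (S : ℕ) (T0 : Finset (Fin p)) (M : Matrix (Fin p) (Fin p) ℝ) : ℝ :=
  sInf {x | ∃ T : Finset (Fin p), T0 ⊆ T ∧ T.card ≤ 2 * S ∧
    ∃ h : Fin p → ℝ, h ≠ 0 ∧ coneC T0 h ∧
      (∀ j ∈ T \ T0, linf (restr Tᶜ h) ≤ |h j|) ∧
      x = Real.sqrt (quad M h) / l2 (restr T h)}

/-- Restricted isometry constant `δ_N(M)`: the smallest `δ ≥ 0` such that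
`(1-δ)‖h‖₂² ≤ hᵀM_{T,T}h ≤ (1+δ)‖h‖₂²` for all `T` with `|T| ≤ N` and `h` supported on `T`. -/
noncomputable def deltaRIC {p : ℕ} (N : ℕ) (M : Matrix (Fin p) (Fin p) ℝ) : ℝ :=
  sInf {δ : ℝ | 0 ≤ δ ∧ ∀ T : Finset (Fin p), T.card ≤ N →
    ∀ h : Fin p → ℝ, (∀ j, j ∉ T → h j = 0) →
      (1 - δ) * (∑ j, (h j) ^ 2) ≤ quad M h ∧ quad M h ≤ (1 + δ) * (∑ j, (h j) ^ 2)}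

/-- Restricted orthogonality constant `θ_{S,S'}(M)`: the smallest `θ ≥ 0` such that
`|hᵀM_{T,T'}h'| ≤ θ‖h‖₂‖h'‖₂` for all disjoint `T, T'` with `|T| ≤ S`, `|T'| ≤ S'`. -/
noncomputable def thetaROC {p : ℕ} (S S' : ℕ) (M : Matrix (Fin p) (Fin p) ℝ) : ℝ :=
  sInf {θ : ℝ | 0 ≤ θ ∧ ∀ T T' : Finset (Fin p), Disjoint T T' →
    T.card ≤ S → T'.card ≤ S' →
    ∀ h h' : Fin p → ℝ, (∀ j, j ∉ T → h j = 0) → (∀ j, j ∉ T' → h' j = 0) →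
      |h ⬝ᵥ M.mulVec h'| ≤ θ * l2 h * l2 h'}


section Norms

variable {p : ℕ}

lemma restr_add_restr_compl (T : Finset (Fin p)) (h : Fin p → ℝ) :
    restr T h + restr Tᶜ h = h := by
  funext j; by_cases hj : j ∈ T <;> simp [restr, hj]

lemma abs_restr_le (T : Finset (Fin p)) (h : Fin p → ℝ) (j : Fin p) :
    |restr T h j| ≤ |h j| := by
  unfold restr; split_ifs <;> simp

lemma sum_restr (T : Finset (Fin p)) (h : Fin p → ℝ) {f : ℝ → ℝ} (hf : f 0 = 0) :
    ∑ j, f (restr T h j) = ∑ j ∈ T, f (h j) := by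
  simp [restr, apply_ite f, hf, Finset.sum_ite_mem]

lemma l1_restr (T : Finset (Fin p)) (h : Fin p → ℝ) : l1 (restr T h) = ∑ j ∈ T, |h j| :=
  sum_restr T h abs_zero

lemma l2_restr (T : Finset (Fin p)) (h : Fin p → ℝ) :
    l2 (restr T h) = √(∑ j ∈ T, h j ^ 2) := by
  rw [l2, sum_restr T h (f := fun x => x ^ 2) (by simp)]

lemma l1_restr_add_l1_restr_compl (T : Finset (Fin p)) (h : Fin p → ℝ) :
    l1 (restr T h) + l1 (restr Tᶜ h) = l1 h := by
  rw [l1_restr, l1_restr, Finset.sum_add_sum_compl, l1]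

lemma l1_restr_mono {T T' : Finset (Fin p)} (hTT' : T ⊆ T') (h : Fin p → ℝ) :
    l1 (restr T h) ≤ l1 (restr T' h) := by
  rw [l1_restr, l1_restr]
  exact Finset.sum_le_sum_of_subset_of_nonneg hTT' fun _ _ _ => abs_nonneg _

lemma l2_restr_mono {T T' : Finset (Fin p)} (hTT' : T ⊆ T') (h : Fin p → ℝ) :
    l2 (restr T h) ≤ l2 (restr T' h) := by
  rw [l2_restr, l2_restr]
  exact Real.sqrt_le_sqrt <| Finset.sum_le_sum_of_subset_of_nonneg hTT' fun _ _ _ => sq_nonneg _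

lemma l1_nonneg (h : Fin p → ℝ) : 0 ≤ l1 h := Finset.sum_nonneg fun _ _ => abs_nonneg _

lemma l2_nonneg (h : Fin p → ℝ) : 0 ≤ l2 h := Real.sqrt_nonneg _

lemma eq_zero_of_l1_nonpos {h : Fin p → ℝ} (hh : l1 h ≤ 0) : h = 0 := by
  funext j
  have := (Finset.sum_eq_zero_iff_of_nonneg fun i _ => abs_nonneg (h i)).mp
    (le_antisymm hh (l1_nonneg h)) j (Finset.mem_univ j)
  simpa using this

lemma mul_self_l2 (h : Fin p → ℝ) : l2 h * l2 h = ∑ j, h j ^ 2 :=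
  Real.mul_self_sqrt (Finset.sum_nonneg fun _ _ => sq_nonneg _)

lemma abs_le_l2 (h : Fin p → ℝ) (i : Fin p) : |h i| ≤ l2 h :=
  Real.abs_le_sqrt <| Finset.single_le_sum (f := fun k => h k ^ 2) (fun _ _ => sq_nonneg _)
    (Finset.mem_univ i)

lemma l1_restr_le_sqrt_card_mul_l2_restr (T : Finset (Fin p)) (h : Fin p → ℝ) :
    l1 (restr T h) ≤ √T.card * l2 (restr T h) := by
  rw [l1_restr, l2_restr, ← Real.sqrt_mul (Nat.cast_nonneg _)]
  refine le_trans (le_abs_self _) (Real.abs_le_sqrt ?_)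
  simpa using sq_sum_le_card_mul_sum_sq (s := T) (f := fun j => |h j|)

lemma l2_le_sqrt_card_mul {s : Finset (Fin p)} {v : Fin p → ℝ} {α : ℝ} (hα : 0 ≤ α)
    (hv : ∀ j ∉ s, v j = 0) (hvα : ∀ j, |v j| ≤ α) : l2 v ≤ √s.card * α := by
  have hrestr : restr s v = v := by
    funext j; by_cases hj : j ∈ s <;> simp [restr, hj, hv]
  rw [← hrestr, l2_restr, ← Real.sqrt_sq hα, ← Real.sqrt_mul (Nat.cast_nonneg _)]
  refine Real.sqrt_le_sqrt ?_
  calc ∑ j ∈ s, v j ^ 2 ≤ ∑ _j ∈ s, α ^ 2 :=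
        Finset.sum_le_sum fun j _ => by
          simpa [sq_abs] using pow_le_pow_left₀ (abs_nonneg _) (hvα j) 2
    _ = s.card * α ^ 2 := by simp

lemma le_l1_restr_div_card {B : Finset (Fin p)} (hB : B.Nonempty) {h : Fin p → ℝ} {x : ℝ}
    (hx : ∀ j ∈ B, x ≤ |h j|) : x ≤ l1 (restr B h) / B.card := by
  rw [le_div_iff₀ (by exact_mod_cast hB.card_pos), mul_comm, l1_restr]
  simpa using Finset.card_nsmul_le_sum B (fun j => |h j|) x hx

lemma l1_le_of_coneC {T0 T : Finset (Fin p)} (hT0T : T0 ⊆ T) {h : Fin p → ℝ}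
    (hcone : coneC T0 h) : l1 h ≤ 2 * (√T.card * l2 (restr T h)) := by
  unfold coneC at hcone
  rw [← l1_restr_add_l1_restr_compl T0 h]
  linarith [l1_restr_mono hT0T h, l1_restr_le_sqrt_card_mul_l2_restr T h]

lemma l2_restr_pos_of_coneC {T0 T : Finset (Fin p)} (hT0T : T0 ⊆ T) {h : Fin p → ℝ}
    (hne : h ≠ 0) (hcone : coneC T0 h) : 0 < l2 (restr T h) := by
  refine (l2_nonneg _).lt_of_ne fun h0 => hne (eq_zero_of_l1_nonpos ?_)
  simpa [← h0] using l1_le_of_coneC hT0T hcone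

lemma abs_le_linf_restr_compl {T : Finset (Fin p)} (h : Fin p → ℝ) {i : Fin p} (hi : i ∉ T) :
    |h i| ≤ linf (restr Tᶜ h) := by
  have : |restr Tᶜ h i| = |h i| := by simp [restr, hi]
  exact this ▸ le_ciSup (Finite.bddAbove_range fun j => |restr Tᶜ h j|) i

end Norms

section Forms

variable {p : ℕ} {M : Matrix (Fin p) (Fin p) ℝ}

lemma quad_nonneg (hM : M.PosSemidef) (h : Fin p → ℝ) : 0 ≤ quad M h := by
  simpa [quad] using hM.dotProduct_mulVec_nonneg h

lemma dotProduct_mulVec_comm (hM : M.IsSymm) (a b : Fin p → ℝ) :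
    a ⬝ᵥ M *ᵥ b = b ⬝ᵥ M *ᵥ a := by
  rw [dotProduct_mulVec, ← mulVec_transpose, hM.eq, dotProduct_comm]

lemma dotProduct_mulVec_le_sqrt_quad_mul_sqrt_quad (hM : M.PosSemidef) (a b : Fin p → ℝ) :
    a ⬝ᵥ M *ᵥ b ≤ √(quad M a) * √(quad M b) := by
  have hsymm : M.IsSymm := by simpa using hM.isHermitian
  have hCS := (toBilin' M).apply_sq_le_of_symm
    (fun x => by simpa [toBilin'_apply'] using hM.dotProduct_mulVec_nonneg x)
    (LinearMap.BilinForm.isSymm_iff.mp (isSymm_toBilin'_iff_isSymm.mpr hsymm)) a b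
  simp only [toBilin'_apply'] at hCS
  rw [← Real.sqrt_mul (quad_nonneg hM a)]
  exact (le_abs_self _).trans (Real.abs_le_sqrt hCS)

lemma abs_dotProduct_mulVec_le (M : Matrix (Fin p) (Fin p) ℝ) (a b : Fin p → ℝ) :
    |a ⬝ᵥ M *ᵥ b| ≤ (∑ i, ∑ j, |M i j|) * l2 a * l2 b := by
  calc |a ⬝ᵥ M *ᵥ b| = |∑ i, ∑ j, a i * M i j * b j| := by
        simp [dotProduct, mulVec, Finset.mul_sum, mul_assoc]
    _ ≤ ∑ i, ∑ j, |a i * M i j * b j| :=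
        (abs_sum_le_sum_abs _ _).trans (sum_le_sum fun i _ => abs_sum_le_sum_abs _ _)
    _ ≤ ∑ i, ∑ j, |M i j| * l2 a * l2 b := by
        gcongr with i _ j _
        rw [abs_mul, abs_mul]
        nlinarith [abs_le_l2 a i, abs_le_l2 b j, abs_nonneg (a i), abs_nonneg (b j),
          abs_nonneg (M i j), mul_le_mul (abs_le_l2 a i) (abs_le_l2 b j) (abs_nonneg _)
            (l2_nonneg a)]
    _ = (∑ i, ∑ j, |M i j|) * l2 a * l2 b := by simp [Finset.sum_mul]

end Forms

section Constants

variable {p : ℕ}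

def IsRICBound (N : ℕ) (M : Matrix (Fin p) (Fin p) ℝ) (δ : ℝ) : Prop :=
  ∀ T : Finset (Fin p), T.card ≤ N → ∀ h : Fin p → ℝ, (∀ j, j ∉ T → h j = 0) →
    (1 - δ) * (∑ j, (h j) ^ 2) ≤ quad M h ∧ quad M h ≤ (1 + δ) * (∑ j, (h j) ^ 2)

def IsROCBound (S S' : ℕ) (M : Matrix (Fin p) (Fin p) ℝ) (θ : ℝ) : Prop :=
  ∀ T T' : Finset (Fin p), Disjoint T T' → T.card ≤ S → T'.card ≤ S' →
    ∀ h h' : Fin p → ℝ, (∀ j, j ∉ T → h j = 0) → (∀ j, j ∉ T' → h' j = 0) →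
      |h ⬝ᵥ M.mulVec h'| ≤ θ * l2 h * l2 h'

variable {N S S' : ℕ} {M : Matrix (Fin p) (Fin p) ℝ} {δ δ' θ θ' : ℝ}

lemma deltaRIC_eq_sInf : deltaRIC N M = sInf {δ | 0 ≤ δ ∧ IsRICBound N M δ} := rfl

lemma thetaROC_eq_sInf : thetaROC S S' M = sInf {θ | 0 ≤ θ ∧ IsROCBound S S' M θ} := rfl

lemma IsRICBound.mono (hδ : IsRICBound N M δ) (hδδ' : δ ≤ δ') : IsRICBound N M δ' := by
  intro T hT h hh
  obtain ⟨hlow, hupp⟩ := hδ T hT h hh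
  have : 0 ≤ ∑ j, h j ^ 2 := Finset.sum_nonneg fun _ _ => sq_nonneg _
  constructor <;> nlinarith

lemma IsROCBound.mono (hθ : IsROCBound S S' M θ) (hθθ' : θ ≤ θ') : IsROCBound S S' M θ' := by
  intro T T' hTT' hT hT' h h' hh hh'
  have := mul_le_mul_of_nonneg_right (mul_le_mul_of_nonneg_right hθθ' (l2_nonneg h))
    (l2_nonneg h')
  linarith [hθ T T' hTT' hT hT' h h' hh hh']

lemma isRICBound_one_add_sum_abs (M : Matrix (Fin p) (Fin p) ℝ) :
    IsRICBound N M (1 + ∑ i, ∑ j, |M i j|) := by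
  intro T _ h _
  have hquad := abs_le.mp <| (abs_dotProduct_mulVec_le M h h).trans_eq
    (by rw [mul_assoc, mul_self_l2])
  have : 0 ≤ ∑ j, h j ^ 2 := Finset.sum_nonneg fun _ _ => sq_nonneg _
  constructor <;> unfold quad <;> linarith [hquad.1, hquad.2]

lemma isROCBound_sum_abs (M : Matrix (Fin p) (Fin p) ℝ) :
    IsROCBound S S' M (∑ i, ∑ j, |M i j|) :=
  fun _ _ _ _ _ h h' _ _ => abs_dotProduct_mulVec_le M h h'

lemma deltaRIC_nonneg (N : ℕ) (M : Matrix (Fin p) (Fin p) ℝ) : 0 ≤ deltaRIC N M :=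
  Real.sInf_nonneg fun _ hx => hx.1

lemma thetaROC_nonneg (S S' : ℕ) (M : Matrix (Fin p) (Fin p) ℝ) : 0 ≤ thetaROC S S' M :=
  Real.sInf_nonneg fun _ hx => hx.1

lemma isRICBound_deltaRIC_add {ε : ℝ} (hε : 0 < ε) : IsRICBound N M (deltaRIC N M + ε) := by
  rw [deltaRIC_eq_sInf]
  obtain ⟨δ, ⟨-, hδ⟩, hlt⟩ := Real.lt_sInf_add_pos (s := {δ | 0 ≤ δ ∧ IsRICBound N M δ})
    ⟨_, add_nonneg zero_le_one (by positivity), isRICBound_one_add_sum_abs M⟩ hε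
  exact hδ.mono hlt.le

lemma isROCBound_thetaROC_add {ε : ℝ} (hε : 0 < ε) :
    IsROCBound S S' M (thetaROC S S' M + ε) := by
  rw [thetaROC_eq_sInf]
  obtain ⟨θ, ⟨-, hθ⟩, hlt⟩ := Real.lt_sInf_add_pos (s := {θ | 0 ≤ θ ∧ IsROCBound S S' M θ})
    ⟨_, by positivity, isROCBound_sum_abs M⟩ hε
  exact hθ.mono hlt.le

end Constants

section Selection

variable {ι α : Type*} [DecidableEq ι] [LinearOrder α]

lemma exists_top_subset (w : ι → α) (s : Finset ι) {k : ℕ} (hk : k ≤ s.card) :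
    ∃ B ⊆ s, B.card = k ∧ ∀ i ∈ B, ∀ j ∈ s \ B, w j ≤ w i := by
  induction k with
  | zero => exact ⟨∅, empty_subset s, rfl, by simp⟩
  | succ k ih =>
    obtain ⟨B, hBs, hBk, hB⟩ := ih (by omega)
    obtain ⟨m, hm, hmax⟩ := (s \ B).exists_max_image w
      (by rw [← card_pos, card_sdiff_of_subset hBs]; omega)
    have hmB : m ∉ B := (mem_sdiff.mp hm).2
    refine ⟨insert m B, insert_subset (mem_sdiff.mp hm).1 hBs,
      by rw [card_insert_of_notMem hmB, hBk], fun i hi j hj => ?_⟩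
    have hj' : j ∈ s \ B := by
      simp only [mem_sdiff, mem_insert, not_or] at hj ⊢
      exact ⟨hj.1, hj.2.2⟩
    rcases mem_insert.mp hi with rfl | hi
    · exact hmax j hj'
    · exact hB i hi j hj'

lemma exists_superset_card_eq_forall_le [Fintype ι] (w : ι → α) {T : Finset ι} {N : ℕ}
    (hTN : T.card ≤ N) (hN : N ≤ Fintype.card ι) :
    ∃ T', T ⊆ T' ∧ T'.card = N ∧ ∀ j ∈ T' \ T, ∀ i ∉ T', w i ≤ w j := by
  obtain ⟨B, hBT, hBcard, hB⟩ := exists_top_subset w Tᶜ (k := N - T.card)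
    (by rw [card_compl]; omega)
  have hdisj : Disjoint T B := disjoint_of_subset_right hBT disjoint_compl_right
  refine ⟨T ∪ B, subset_union_left, by rw [card_union_of_disjoint hdisj]; omega,
    fun j hj i hi => hB j ?_ i ?_⟩
  · simp only [mem_sdiff, mem_union] at hj
    tauto
  · simp only [mem_sdiff, mem_compl, mem_union, not_or] at hi ⊢
    tauto

end Selection

lemma sqrt_mul_div_eq_div_sqrt (x y : ℝ) : √x * (y / x) = y / √x := by
  rw [mul_div_assoc', mul_comm, mul_div_assoc, Real.sqrt_div_self', mul_one_div]

section Shifting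

variable {p S S' : ℕ} {M : Matrix (Fin p) (Fin p) ℝ} {θ α : ℝ} {A s : Finset (Fin p)}
  {a v : Fin p → ℝ}

lemma abs_dotProduct_mulVec_le_of_card_le (hM : M.IsSymm) (hθ : IsROCBound S S' M θ)
    (hθ0 : 0 ≤ θ) (hA : A.card ≤ S') (ha : ∀ j ∉ A, a j = 0) (hs : s.card ≤ S)
    (hsA : Disjoint s A) (hv : ∀ j ∉ s, v j = 0) (hα : 0 ≤ α) (hvα : ∀ j, |v j| ≤ α) :
    |a ⬝ᵥ M *ᵥ v| ≤ θ * l2 a * (√S * α) := by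
  have hθa : 0 ≤ θ * l2 a := mul_nonneg hθ0 (l2_nonneg a)
  rw [dotProduct_mulVec_comm hM]
  calc |v ⬝ᵥ M *ᵥ a| ≤ θ * l2 v * l2 a := hθ s A hsA hs hA v a hv ha
    _ = θ * l2 a * l2 v := by ring
    _ ≤ θ * l2 a * (√S * α) := by
      gcongr
      calc l2 v ≤ √s.card * α := l2_le_sqrt_card_mul hα hv hvα
        _ ≤ √S * α := by gcongr

/-- The shifting inequality: peeling off the `S` largest entries of `v` at a time, each block
is dominated entrywise by the average of the previous one. -/
lemma abs_dotProduct_mulVec_le_shifting (hS : 0 < S) (hM : M.IsSymm)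
    (hθ : IsROCBound S S' M θ) (hθ0 : 0 ≤ θ) (hA : A.card ≤ S') (ha : ∀ j ∉ A, a j = 0)
    (hsA : Disjoint s A) (hv : ∀ j ∉ s, v j = 0) (hα : 0 ≤ α) (hvα : ∀ j, |v j| ≤ α) :
    |a ⬝ᵥ M *ᵥ v| ≤ θ * l2 a * (√S * α + l1 v / √S) := by
  have hθa : 0 ≤ θ * l2 a := mul_nonneg hθ0 (l2_nonneg a)
  have hsqrtS : 0 < √(S : ℝ) := Real.sqrt_pos.mpr (by exact_mod_cast hS)
  obtain ⟨n, hn⟩ : ∃ n, s.card = n := ⟨_, rfl⟩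
  induction n using Nat.strong_induction_on generalizing s v α with
  | _ n ih =>
    by_cases hsS : s.card ≤ S
    · calc |a ⬝ᵥ M *ᵥ v| ≤ θ * l2 a * (√S * α) :=
            abs_dotProduct_mulVec_le_of_card_le hM hθ hθ0 hA ha hsS hsA hv hα hvα
        _ ≤ θ * l2 a * (√S * α + l1 v / √S) := by
            gcongr
            linarith [div_nonneg (l1_nonneg v) hsqrtS.le]
    rw [not_le] at hsS
    obtain ⟨B, hBs, hBcard, hB⟩ := exists_top_subset (fun j => |v j|) s hsS.le
    have hBne : B.Nonempty := card_pos.mp (hBcard ▸ hS)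
    set α' := l1 (restr B v) / S
    have hα' : 0 ≤ α' := div_nonneg (l1_nonneg _) (Nat.cast_nonneg _)
    have hv₂α' : ∀ j, |restr Bᶜ v j| ≤ α' := by
      intro j
      by_cases hjB : j ∈ B
      · simpa [restr, hjB] using hα'
      by_cases hjs : j ∈ s
      · simpa [restr, hjB, hBcard] using
          le_l1_restr_div_card hBne fun i hi => hB i hi j (mem_sdiff.mpr ⟨hjs, hjB⟩)
      · simpa [restr, hjB, hv j hjs] using hα'
    have hv₂ : ∀ j ∉ s \ B, restr Bᶜ v j = 0 := by
      intro j hj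
      by_cases hjB : j ∈ B
      · simp [restr, hjB]
      · simp [restr, hjB, hv j (by simpa [hjB] using hj)]
    have hcard : (s \ B).card < n := by
      rw [card_sdiff_of_subset hBs]; omega
    have hIH := ih _ hcard (hsA.mono_left sdiff_subset) hv₂ hα' hv₂α' rfl
    have hv₁ : ∀ j ∉ B, restr B v j = 0 := fun j hj => by simp [restr, hj]
    have h₁ := abs_dotProduct_mulVec_le_of_card_le hM hθ hθ0 hA ha hBcard.le
      (hsA.mono_left hBs) hv₁ hα fun j => (abs_restr_le B v j).trans (hvα j)
    have hsplit : a ⬝ᵥ M *ᵥ v = a ⬝ᵥ M *ᵥ restr B v + a ⬝ᵥ M *ᵥ restr Bᶜ v := by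
      conv_lhs => rw [← restr_add_restr_compl B v]
      rw [mulVec_add, dotProduct_add]
    calc |a ⬝ᵥ M *ᵥ v| ≤ |a ⬝ᵥ M *ᵥ restr B v| + |a ⬝ᵥ M *ᵥ restr Bᶜ v| :=
          hsplit ▸ abs_add_le _ _
      _ ≤ θ * l2 a * (√S * α) + θ * l2 a * (√S * α' + l1 (restr Bᶜ v) / √S) :=
          add_le_add h₁ hIH
      _ = θ * l2 a * (√S * α + l1 v / √S) := by
          rw [sqrt_mul_div_eq_div_sqrt, ← l1_restr_add_l1_restr_compl B v]
          ring

end Shifting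

section Cone

variable {p S : ℕ} {M : Matrix (Fin p) (Fin p) ℝ} {δ θ : ℝ} {T0 T : Finset (Fin p)}
  {h : Fin p → ℝ}

lemma abs_dotProduct_mulVec_restr_compl_le (hS : 0 < S) (hM : M.IsSymm)
    (hθ : IsROCBound S (2 * S) M θ) (hθ0 : 0 ≤ θ) (hT0 : T0.card = S) (hT0T : T0 ⊆ T)
    (hT : T.card = 2 * S) (hcone : coneC T0 h)
    (hdom : ∀ j ∈ T \ T0, ∀ i ∉ T, |h i| ≤ |h j|) :
    |restr T h ⬝ᵥ M *ᵥ restr Tᶜ h| ≤ θ * (l2 (restr T h) * l2 (restr T h)) := by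
  have hsqrtS : 0 < √(S : ℝ) := Real.sqrt_pos.mpr (by exact_mod_cast hS)
  have hcard : (T \ T0).card = S := by rw [card_sdiff_of_subset hT0T, hT, hT0]; omega
  have hne : (T \ T0).Nonempty := card_pos.mp (hcard ▸ hS)
  set α := l1 (restr (T \ T0) h) / S
  have hα : 0 ≤ α := div_nonneg (l1_nonneg _) (Nat.cast_nonneg _)
  have hvα : ∀ j, |restr Tᶜ h j| ≤ α := by
    intro j
    by_cases hj : j ∈ T
    · simpa [restr, hj] using hα
    · simpa [restr, hj, hcard] using le_l1_restr_div_card hne fun i hi => hdom i hi j hj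
  have hcross := abs_dotProduct_mulVec_le_shifting (a := restr T h) (v := restr Tᶜ h) hS hM hθ
    hθ0 hT.le (fun j hj => by simp [restr, hj]) disjoint_compl_left
    (fun j hj => by simp [restr, hj]) hα hvα
  have hmass : √S * α + l1 (restr Tᶜ h) / √S ≤ l2 (restr T h) := by
    rw [sqrt_mul_div_eq_div_sqrt, ← add_div, div_le_iff₀ hsqrtS]
    calc l1 (restr (T \ T0) h) + l1 (restr Tᶜ h) = l1 (restr T0ᶜ h) := by
          rw [l1_restr, l1_restr, l1_restr, ← compl_sdiff_compl (x := T0),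
            sum_sdiff (compl_subset_compl.mpr hT0T)]
      _ ≤ l1 (restr T0 h) := hcone
      _ ≤ √S * l2 (restr T0 h) := hT0 ▸ l1_restr_le_sqrt_card_mul_l2_restr T0 h
      _ ≤ √S * l2 (restr T h) := by gcongr; exact l2_restr_mono hT0T h
      _ = l2 (restr T h) * √S := mul_comm _ _
  calc _ ≤ θ * l2 (restr T h) * (√S * α + l1 (restr Tᶜ h) / √S) := hcross
    _ ≤ θ * l2 (restr T h) * l2 (restr T h) := by
        gcongr
        exact mul_nonneg hθ0 (l2_nonneg _)
    _ = θ * (l2 (restr T h) * l2 (restr T h)) := mul_assoc _ _ _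

/-- Testing `hᵀMh` against `a = h_T` through Cauchy–Schwarz: `aᵀMh = aᵀMa + aᵀMh_{Tᶜ}` is at
least `(1 - δ - θ)‖a‖₂²` and at most `√(aᵀMa) √(hᵀMh) ≤ √(1 + δ) ‖a‖₂ √(hᵀMh)`. -/
lemma mul_l2_restr_le_sqrt_mul_sqrt_quad (hS : 0 < S) (hM : M.PosSemidef)
    (hδ : IsRICBound (2 * S) M δ) (hθ : IsROCBound S (2 * S) M θ) (hθ0 : 0 ≤ θ)
    (hT0 : T0.card = S) (hT0T : T0 ⊆ T) (hT : T.card = 2 * S) (hcone : coneC T0 h)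
    (hdom : ∀ j ∈ T \ T0, ∀ i ∉ T, |h i| ≤ |h j|) :
    (1 - δ - θ) * l2 (restr T h) ≤ √(1 + δ) * √(quad M h) := by
  set a := restr T h
  have hsymm : M.IsSymm := by simpa using hM.isHermitian
  have hcross := abs_dotProduct_mulVec_restr_compl_le hS hsymm hθ hθ0 hT0 hT0T hT hcone hdom
  obtain ⟨hlow, hupp⟩ := hδ T hT.le a fun j hj => by simp [a, restr, hj]
  rw [← mul_self_l2] at hlow hupp
  have hsplit : a ⬝ᵥ M *ᵥ h = quad M a + a ⬝ᵥ M *ᵥ restr Tᶜ h := by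
    conv_lhs => rw [← restr_add_restr_compl T h]
    rw [mulVec_add, dotProduct_add, quad]
  have hquad_a : √(quad M a) ≤ √(1 + δ) * l2 a := by
    rw [← Real.sqrt_mul_self (l2_nonneg a), ← Real.sqrt_mul' _ (mul_self_nonneg _)]
    exact Real.sqrt_le_sqrt hupp
  have key : (1 - δ - θ) * l2 a * l2 a ≤ √(1 + δ) * √(quad M h) * l2 a := by
    calc (1 - δ - θ) * l2 a * l2 a ≤ a ⬝ᵥ M *ᵥ h := by
          rw [hsplit]
          nlinarith [neg_abs_le (a ⬝ᵥ M *ᵥ restr Tᶜ h)]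
      _ ≤ √(quad M a) * √(quad M h) := dotProduct_mulVec_le_sqrt_quad_mul_sqrt_quad hM a h
      _ ≤ √(1 + δ) * l2 a * √(quad M h) := by gcongr
      _ = √(1 + δ) * √(quad M h) * l2 a := by ring
  rcases (l2_nonneg a).eq_or_lt with h0 | hpos
  · rw [← h0, mul_zero]
    positivity
  · exact le_of_mul_le_mul_right key hpos

lemma exists_superset_card_eq_dominating {N : ℕ} (hTN : T.card ≤ N) (hNp : N ≤ p)
    (hD : ∀ j ∈ T \ T0, linf (restr Tᶜ h) ≤ |h j|) :
    ∃ T', T ⊆ T' ∧ T'.card = N ∧ ∀ j ∈ T' \ T0, ∀ i ∉ T', |h i| ≤ |h j| := by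
  obtain ⟨T', hTT', hcard, hdom⟩ :=
    exists_superset_card_eq_forall_le (fun j => |h j|) hTN (by simpa using hNp)
  refine ⟨T', hTT', hcard, fun j hj i hi => ?_⟩
  obtain ⟨hjT', hjT0⟩ := mem_sdiff.mp hj
  by_cases hjT : j ∈ T
  · exact (abs_le_linf_restr_compl h fun hiT => hi (hTT' hiT)).trans
      (hD j (mem_sdiff.mpr ⟨hjT, hjT0⟩))
  · exact hdom j (mem_sdiff.mpr ⟨hjT', hjT⟩) i hi

end Cone

section Phi

variable {p S : ℕ} {M : Matrix (Fin p) (Fin p) ℝ} {δ θ : ℝ} {T0 : Finset (Fin p)}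

def phi2SSet (S : ℕ) (T0 : Finset (Fin p)) (M : Matrix (Fin p) (Fin p) ℝ) : Set ℝ :=
  {x | ∃ T : Finset (Fin p), T0 ⊆ T ∧ T.card ≤ 2 * S ∧
    ∃ h : Fin p → ℝ, h ≠ 0 ∧ coneC T0 h ∧
      (∀ j ∈ T \ T0, linf (restr Tᶜ h) ≤ |h j|) ∧
      x = Real.sqrt (quad M h) / l2 (restr T h)}

lemma phi2S_eq_sInf : phi2S S T0 M = sInf (phi2SSet S T0 M) := rfl

lemma bddBelow_phi2SSet : BddBelow (phi2SSet S T0 M) :=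
  ⟨0, by
    rintro _ ⟨_, _, _, _, _, _, _, rfl⟩
    exact div_nonneg (Real.sqrt_nonneg _) (l2_nonneg _)⟩

lemma sqrt_quad_restr_one_div_mem_phi2SSet (hT0 : T0.Nonempty) (hT0S : T0.card ≤ 2 * S) :
    √(quad M (restr T0 1)) / √T0.card ∈ phi2SSet S T0 M := by
  obtain ⟨j, hj⟩ := hT0
  refine ⟨T0, subset_rfl, hT0S, restr T0 1, fun h0 => ?_, ?_, by simp [restr], ?_⟩
  · simpa [restr, hj] using congrFun h0 j
  · rw [coneC, l1_restr, sum_eq_zero fun i hi => by simp [restr, mem_compl.mp hi]]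
    exact l1_nonneg _
  · rw [l2_restr, sum_congr rfl fun i hi => show restr T0 1 i ^ 2 = 1 by simp [restr, hi]]
    simp

lemma phi2S_le_sqrt (hT0 : T0.Nonempty) (hT0S : T0.card ≤ 2 * S)
    (hδ : IsRICBound (2 * S) M δ) : phi2S S T0 M ≤ √(1 + δ) := by
  have hquad := (hδ T0 hT0S (restr T0 1) fun j hj => by simp [restr, hj]).2
  rw [sum_restr T0 1 (f := fun x => x ^ 2) (by simp)] at hquad
  rw [phi2S_eq_sInf]
  refine (csInf_le bddBelow_phi2SSet (sqrt_quad_restr_one_div_mem_phi2SSet hT0 hT0S)).trans ?_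
  rw [div_le_iff₀ (by simpa using hT0.card_pos), ← Real.sqrt_mul' _ (Nat.cast_nonneg _)]
  exact Real.sqrt_le_sqrt (by simpa using hquad)

lemma div_sqrt_le_phi2S (hS : 0 < S) (hp : 2 * S ≤ p) (hM : M.PosSemidef) (hT0 : T0.card = S)
    (hδ0 : 0 ≤ δ) (hδ : IsRICBound (2 * S) M δ) (hθ0 : 0 ≤ θ) (hθ : IsROCBound S (2 * S) M θ)
    (hδθ : 0 ≤ 1 - δ - θ) : (1 - δ - θ) / √(1 + δ) ≤ phi2S S T0 M := by
  rw [phi2S_eq_sInf]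
  refine le_csInf ⟨_, sqrt_quad_restr_one_div_mem_phi2SSet (card_pos.mp (hT0 ▸ hS)) (by omega)⟩ ?_
  rintro _ ⟨T, hT0T, hTS, h, hne, hcone, hD, rfl⟩
  obtain ⟨T', hTT', hT'card, hdom⟩ := exists_superset_card_eq_dominating hTS hp hD
  rw [div_le_div_iff₀ (Real.sqrt_pos.mpr (by linarith)) (l2_restr_pos_of_coneC hT0T hne hcone)]
  calc (1 - δ - θ) * l2 (restr T h) ≤ (1 - δ - θ) * l2 (restr T' h) := by
        gcongr
        exact l2_restr_mono hTT' h
    _ ≤ √(1 + δ) * √(quad M h) :=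
        mul_l2_restr_le_sqrt_mul_sqrt_quad hS hM hδ hθ hθ0 hT0 (hT0T.trans hTT') hT'card hcone hdom
    _ = √(quad M h) * √(1 + δ) := mul_comm _ _

lemma phi2S_mem_Icc (hS : 0 < S) (hp : 2 * S ≤ p) (hM : M.PosSemidef) (hT0 : T0.card = S)
    {c : ℝ} (hc0 : 0 < c) (hc : c ≤ 1 - deltaRIC (2 * S) M - thetaROC S (2 * S) M) :
    phi2S S T0 M ∈ Set.Icc (c / 4) 2 := by
  have hδ0 := deltaRIC_nonneg (2 * S) M
  have hθ0 := thetaROC_nonneg S (2 * S) M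
  have hδ := isRICBound_deltaRIC_add (N := 2 * S) (M := M) (by positivity : 0 < c / 4)
  have hθ := isROCBound_thetaROC_add (S := S) (S' := 2 * S) (M := M) (by positivity : 0 < c / 4)
  have hsqrt : √(1 + (deltaRIC (2 * S) M + c / 4)) ≤ 2 :=
    Real.sqrt_le_iff.mpr ⟨by norm_num, by linarith⟩
  refine ⟨?_, (phi2S_le_sqrt (card_pos.mp (hT0 ▸ hS)) (by omega) hδ).trans hsqrt⟩
  calc c / 4 = c / 2 / 2 := by ring
    _ ≤ (1 - (deltaRIC (2 * S) M + c / 4) - (thetaROC S (2 * S) M + c / 4)) /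
          √(1 + (deltaRIC (2 * S) M + c / 4)) :=
        div_le_div₀ (by linarith) (by linarith) (Real.sqrt_pos.mpr (by linarith)) hsqrt
    _ ≤ phi2S S T0 M :=
        div_sqrt_le_phi2S hS hp hM hT0 (by linarith) hδ (by linarith) hθ (by linarith)

end Phi

lemma exists_pos_eventually_le_of_liminf_pos {ι : Type*} {f : Filter ι} {u : ι → ℝ}
    (hu : 0 < Filter.liminf u f) : ∃ c > 0, ∀ᶠ n in f, c ≤ u n := by
  rw [Filter.liminf_eq] at hu
  have hne : {a | ∀ᶠ n in f, a ≤ u n}.Nonempty := by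
    by_contra he
    rw [Set.not_nonempty_iff_eq_empty] at he
    simp [he] at hu
  obtain ⟨c, hc, hc0⟩ := exists_lt_of_lt_csSup hne hu
  exact ⟨c, hc0, hc⟩

/-- If `liminf_n (1 - δ_{2S}(Σ_n) - θ_{S,2S}(Σ_n)) > 0`, then
`liminf_n φ_{2S}(T₀⁽ⁿ⁾; Σ_n) > 0`. -/
theorem stmt0 (S : ℕ) (hS : 1 ≤ S) (p : ℕ → ℕ) (hp : ∀ n, 3 * S ≤ p n)
    (M : ∀ n, Matrix (Fin (p n)) (Fin (p n)) ℝ) (hM : ∀ n, (M n).PosSemidef)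
    (T0 : ∀ n, Finset (Fin (p n))) (hT0 : ∀ n, (T0 n).card = S)
    (hliminf : 0 < Filter.atTop.liminf
      (fun n => 1 - deltaRIC (2 * S) (M n) - thetaROC S (2 * S) (M n))) :
    0 < Filter.atTop.liminf (fun n => phi2S S (T0 n) (M n)) := by
  obtain ⟨c, hc0, hc⟩ := exists_pos_eventually_le_of_liminf_pos hliminf
  have hphi : ∀ᶠ n in Filter.atTop, phi2S S (T0 n) (M n) ∈ Set.Icc (c / 4) 2 :=
    hc.mono fun n hn => phi2S_mem_Icc hS (by linarith [hp n]) (hM n) (hT0 n) hc0 hn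
  calc (0 : ℝ) < c / 4 := by positivity
    _ ≤ _ := Filter.le_liminf_of_le
        (Filter.isCoboundedUnder_ge_of_eventually_le _ (hphi.mono fun _ hn => hn.2))
        (hphi.mono fun _ hn => hn.1)
end

section
/- Let Σ be a positive semidefinite p × p real matrix and let T₀ ⊆ {1,…,p} with |T₀| = S ≥ 1 and p ≥ 2S. Then the compatibility factor dominates the factor φ_{2S}: κ(T₀; Σ) ≥ φ_{2S}(T₀; Σ). -/
open Matrix Finset

open Matrix Finset

/-- The compatibility factor dominates `φ_{2S}`: `κ(T₀;Σ) ≥ φ_{2S}(T₀;Σ)`. -/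
theorem stmt2 {p S : ℕ} (hS : 1 ≤ S) (hp : 2 * S ≤ p)
    (M : Matrix (Fin p) (Fin p) ℝ) (hM : M.PosSemidef)
    (T0 : Finset (Fin p)) (hT0 : T0.card = S) :
    phi2S S T0 M ≤ kappa T0 M := by
  have hbdd : BddBelow {x | ∃ T : Finset (Fin p), T0 ⊆ T ∧ T.card ≤ 2 * S ∧
      ∃ h : Fin p → ℝ, h ≠ 0 ∧ coneC T0 h ∧
        (∀ j ∈ T \ T0, linf (restr Tᶜ h) ≤ |h j|) ∧
        x = Real.sqrt (quad M h) / l2 (restr T h)} := by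
    refine ⟨0, ?_⟩
    rintro x ⟨T, _, _, h, _, _, _, rfl⟩
    exact div_nonneg (Real.sqrt_nonneg _) (Real.sqrt_nonneg _)
  apply le_csInf
  · -- kappa set nonempty
    refine ⟨_, (fun j => if j ∈ T0 then (1:ℝ) else 0), ?_, ?_, rfl⟩
    · have hne : T0.Nonempty := Finset.card_pos.mp (by omega)
      obtain ⟨j, hj⟩ := hne
      intro hz
      have := congrFun hz j
      simp [hj] at this
    · unfold coneC l1 restr
      have hz : ∀ j : Fin p, |if j ∈ T0ᶜ then (if j ∈ T0 then (1:ℝ) else 0) else 0| = 0 := by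
        intro j
        by_cases hj : j ∈ T0 <;> simp [hj]
      rw [Finset.sum_congr rfl (fun j _ => hz j)]
      simp only [Finset.sum_const_zero]
      exact Finset.sum_nonneg (fun j _ => abs_nonneg _)
  · rintro x ⟨h, hne, hcone, rfl⟩
    have hmem : Real.sqrt (quad M h) / l2 (restr T0 h) ∈
        {x | ∃ T : Finset (Fin p), T0 ⊆ T ∧ T.card ≤ 2 * S ∧
        ∃ h : Fin p → ℝ, h ≠ 0 ∧ coneC T0 h ∧
          (∀ j ∈ T \ T0, linf (restr Tᶜ h) ≤ |h j|) ∧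
          x = Real.sqrt (quad M h) / l2 (restr T h)} := by
      refine ⟨T0, Finset.Subset.refl _, by omega, h, hne, hcone, ?_, rfl⟩
      intro j hj
      simp at hj
    refine le_trans (csInf_le hbdd hmem) ?_
    set q := Real.sqrt (quad M h) with hq
    have hq0 : 0 ≤ q := Real.sqrt_nonneg _
    have hl1 : l1 (restr T0 h) = ∑ j ∈ T0, |h j| := by
      unfold l1 restr
      rw [← Finset.sum_subset (Finset.subset_univ T0)
        (f := fun j => |if j ∈ T0 then h j else 0|) (by intro j _ hj; simp [hj])]
      exact Finset.sum_congr rfl (fun j hj => by simp [hj])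
    have hl2 : l2 (restr T0 h) = Real.sqrt (∑ j ∈ T0, (h j) ^ 2) := by
      unfold l2 restr
      congr 1
      rw [← Finset.sum_subset (Finset.subset_univ T0)
        (f := fun j => (if j ∈ T0 then h j else 0) ^ 2) (by intro j _ hj; simp [hj])]
      exact Finset.sum_congr rfl (fun j hj => by simp [hj])
    have hCS : l1 (restr T0 h) ≤ Real.sqrt (T0.card) * l2 (restr T0 h) := by
      rw [hl1, hl2, ← Real.sqrt_mul (Nat.cast_nonneg _)]
      have key : (∑ j ∈ T0, |h j|) ^ 2 ≤ (T0.card : ℝ) * ∑ j ∈ T0, (h j) ^ 2 := by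
        have := sq_sum_le_card_mul_sum_sq (s := T0) (f := fun j => |h j|)
        simpa [sq_abs] using this
      calc (∑ j ∈ T0, |h j|)
          = Real.sqrt ((∑ j ∈ T0, |h j|) ^ 2) := by
            rw [Real.sqrt_sq (Finset.sum_nonneg (fun j _ => abs_nonneg _))]
        _ ≤ Real.sqrt ((T0.card : ℝ) * ∑ j ∈ T0, (h j) ^ 2) := Real.sqrt_le_sqrt key
    have hl1nn : 0 ≤ l1 (restr T0 h) := by
      rw [hl1]; exact Finset.sum_nonneg (fun j _ => abs_nonneg _)
    have hl2nn : 0 ≤ l2 (restr T0 h) := Real.sqrt_nonneg _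
    rcases eq_or_lt_of_le hl1nn with hzero | hpos
    · -- l1 = 0, hence l2 = 0: both sides are q/0 = 0
      have habs0 : ∀ j ∈ T0, |h j| = 0 := fun j hj =>
        (Finset.sum_eq_zero_iff_of_nonneg (fun j _ => abs_nonneg (h j))).mp
          (by rw [← hl1, ← hzero]) j hj
      have hsum0 : ∑ j ∈ T0, (h j) ^ 2 = 0 := by
        refine Finset.sum_eq_zero (fun j hj => ?_)
        rw [pow_eq_zero_iff (by norm_num), ← abs_eq_zero]
        exact habs0 j hj
      rw [hl2, hsum0, ← hzero, Real.sqrt_zero, div_zero, div_zero]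
    · have hl2pos : 0 < l2 (restr T0 h) := by
        rcases eq_or_lt_of_le hl2nn with hz | hp2
        · exfalso
          have : l1 (restr T0 h) ≤ 0 := by
            calc l1 (restr T0 h) ≤ Real.sqrt (T0.card) * l2 (restr T0 h) := hCS
              _ = 0 := by rw [← hz, mul_zero]
          linarith
        · exact hp2
      rw [div_le_div_iff₀ hl2pos hpos]
      calc q * l1 (restr T0 h) ≤ q * (Real.sqrt (T0.card) * l2 (restr T0 h)) :=
            mul_le_mul_of_nonneg_left hCS hq0
        _ = Real.sqrt (T0.card) * q * l2 (restr T0 h) := by ring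
end

section
/- Let z_1,…,z_n ∈ ℝ^p and let a_1,…,a_n ≥ 0 with Σ_{k=1}^n a_k > 0. For β ∈ ℝ^p define S⁰(β) := Σ_k a_k exp(z_kᵀβ), the weighted mean m(β) := Σ_k a_k exp(z_kᵀβ) z_k / S⁰(β), and the weighted covariance matrix H(β) := Σ_k a_k exp(z_kᵀβ) z_k z_kᵀ / S⁰(β) − m(β)m(β)ᵀ (which are the gradient and Hessian of the convex function β ↦ log S⁰(β)). Then for all β, h ∈ ℝ^p, with η_h := max_{1≤i,j≤n} |hᵀz_i − hᵀz_j|, it holds that e^{−η_h} hᵀH(β)h ≤ hᵀ(m(β+h) − m(β)) ≤ e^{η_h} hᵀH(β)h. -/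
open Matrix Finset

/-- `S⁰(β) = Σ_k a_k exp(z_kᵀβ)`. -/
noncomputable def wS0 {n p : ℕ} (z : Fin n → Fin p → ℝ) (a : Fin n → ℝ) (β : Fin p → ℝ) : ℝ :=
  ∑ k, a k * Real.exp (z k ⬝ᵥ β)

/-- The weighted mean `m(β) = Σ_k a_k exp(z_kᵀβ) z_k / S⁰(β)`. -/
noncomputable def wmean {n p : ℕ} (z : Fin n → Fin p → ℝ) (a : Fin n → ℝ) (β : Fin p → ℝ) :
    Fin p → ℝ :=
  fun j => (∑ k, a k * Real.exp (z k ⬝ᵥ β) * z k j) / wS0 z a β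

/-- The weighted covariance matrix
`H(β) = Σ_k a_k exp(z_kᵀβ) z_k z_kᵀ / S⁰(β) − m(β)m(β)ᵀ`. -/
noncomputable def wcov {n p : ℕ} (z : Fin n → Fin p → ℝ) (a : Fin n → ℝ) (β : Fin p → ℝ) :
    Matrix (Fin p) (Fin p) ℝ :=
  fun i j =>
    (∑ k, a k * Real.exp (z k ⬝ᵥ β) * z k i * z k j) / wS0 z a β -
      wmean z a β i * wmean z a β j

/- ### Auxiliary scalar lemmas -/

lemma HP.scalar_ub_aux (x y c η : ℝ) (hyx : y ≤ x) (hxc : |x - c| ≤ η) :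
    (x - y) * (Real.exp x - Real.exp y) ≤ Real.exp η * ((x - y) * (x - y) * Real.exp c) := by
  have hx := abs_le.1 hxc
  have hexy : Real.exp x * Real.exp (y - x) = Real.exp y := by
    rw [← Real.exp_add]; ring_nf
  have h2 : Real.exp x - Real.exp y ≤ Real.exp x * (x - y) := by
    nlinarith [mul_le_mul_of_nonneg_left (Real.add_one_le_exp (y - x)) (Real.exp_pos x).le]
  have hex : Real.exp x ≤ Real.exp η * Real.exp c := by
    rw [← Real.exp_add]; exact Real.exp_le_exp.2 (by linarith)
  nlinarith [mul_le_mul_of_nonneg_left h2 (sub_nonneg.2 hyx),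
    mul_le_mul_of_nonneg_left hex (mul_self_nonneg (x - y))]

lemma HP.scalar_lb_aux (x y c η : ℝ) (hyx : y ≤ x) (hyc : |y - c| ≤ η) :
    Real.exp (-η) * ((x - y) * (x - y) * Real.exp c) ≤ (x - y) * (Real.exp x - Real.exp y) := by
  have hy := abs_le.1 hyc
  have heyx : Real.exp y * Real.exp (x - y) = Real.exp x := by
    rw [← Real.exp_add]; ring_nf
  have h1 : Real.exp y * (x - y) ≤ Real.exp x - Real.exp y := by
    nlinarith [mul_le_mul_of_nonneg_left (Real.add_one_le_exp (x - y)) (Real.exp_pos y).le]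
  have hey : Real.exp (-η) * Real.exp c ≤ Real.exp y := by
    rw [← Real.exp_add]; exact Real.exp_le_exp.2 (by linarith)
  nlinarith [mul_le_mul_of_nonneg_left h1 (sub_nonneg.2 hyx),
    mul_le_mul_of_nonneg_left hey (mul_self_nonneg (x - y))]

lemma HP.scalar_ub (x y c η : ℝ) (hxc : |x - c| ≤ η) (hyc : |y - c| ≤ η) :
    (x - y) * (Real.exp x - Real.exp y) ≤ Real.exp η * ((x - y) * (x - y) * Real.exp c) := by
  rcases le_total y x with hyx | hxy
  · exact HP.scalar_ub_aux x y c η hyx hxc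
  · have := HP.scalar_ub_aux y x c η hxy hyc
    nlinarith [this]

lemma HP.scalar_lb (x y c η : ℝ) (hxc : |x - c| ≤ η) (hyc : |y - c| ≤ η) :
    Real.exp (-η) * ((x - y) * (x - y) * Real.exp c) ≤ (x - y) * (Real.exp x - Real.exp y) := by
  rcases le_total y x with hyx | hxy
  · exact HP.scalar_lb_aux x y c η hyx hyc
  · have := HP.scalar_lb_aux y x c η hxy hxc
    nlinarith [this]

/- ### Sum manipulation lemmas -/

lemma HP.tripleProd {n : ℕ} (A B C : Fin n → ℝ) :
    (∑ i, A i) * (∑ j, B j) * (∑ k, C k) = ∑ i, ∑ j, ∑ k, A i * B j * C k := by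
  rw [Finset.sum_mul_sum, Finset.sum_mul]
  refine Finset.sum_congr rfl fun i _ => ?_
  rw [Finset.sum_mul]
  exact Finset.sum_congr rfl fun j _ => by rw [Finset.mul_sum]

lemma HP.sym3 {n : ℕ} (f : Fin n → Fin n → Fin n → ℝ) :
    ∑ i, ∑ j, ∑ k, (f i j k + f j i k) = 2 * ∑ i, ∑ j, ∑ k, f i j k := by
  have h1 : ∑ i, ∑ j, ∑ k, (f i j k + f j i k)
      = (∑ i, ∑ j, ∑ k, f i j k) + (∑ i, ∑ j, ∑ k, f j i k) := by
    simp [Finset.sum_add_distrib]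
  have h2 : (∑ i : Fin n, ∑ j : Fin n, ∑ k, f j i k) = ∑ i, ∑ j, ∑ k, f i j k :=
    Finset.sum_comm
  rw [h1, h2]; ring

/-- The core inequality, stated for abstract nonnegative weights `w` and values `u`. -/
lemma HP.core {n : ℕ} (w u : Fin n → ℝ) (hw : ∀ k, 0 ≤ w k) (η : ℝ)
    (hη : ∀ i j : Fin n, |u i - u j| ≤ η) :
    Real.exp (-η) * (((∑ k, w k * (u k * u k)) * (∑ k, w k)
        - (∑ k, w k * u k) * (∑ k, w k * u k)) * (∑ k, w k * Real.exp (u k)))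
      ≤ ((∑ k, w k * Real.exp (u k) * u k) * (∑ k, w k)
        - (∑ k, w k * u k) * (∑ k, w k * Real.exp (u k))) * (∑ k, w k) ∧
    ((∑ k, w k * Real.exp (u k) * u k) * (∑ k, w k)
        - (∑ k, w k * u k) * (∑ k, w k * Real.exp (u k))) * (∑ k, w k)
      ≤ Real.exp η * (((∑ k, w k * (u k * u k)) * (∑ k, w k)
        - (∑ k, w k * u k) * (∑ k, w k * u k)) * (∑ k, w k * Real.exp (u k))) := by
  have hM : 2 * (((∑ k, w k * Real.exp (u k) * u k) * (∑ k, w k)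
        - (∑ k, w k * u k) * (∑ k, w k * Real.exp (u k))) * (∑ k, w k))
      = ∑ i, ∑ j, ∑ k, w i * w j * w k * ((u i - u j) * (Real.exp (u i) - Real.exp (u j))) := by
    rw [sub_mul, HP.tripleProd (fun i => w i * Real.exp (u i) * u i) w w,
        HP.tripleProd (fun i => w i * u i) (fun j => w j * Real.exp (u j)) w]
    simp only [← Finset.sum_sub_distrib]
    rw [← HP.sym3 (fun i j k => w i * Real.exp (u i) * u i * w j * w k
          - w i * u i * (w j * Real.exp (u j)) * w k)]
    refine Finset.sum_congr rfl fun i _ => Finset.sum_congr rfl fun j _ =>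
      Finset.sum_congr rfl fun k _ => by ring
  have hN : 2 * (((∑ k, w k * (u k * u k)) * (∑ k, w k)
        - (∑ k, w k * u k) * (∑ k, w k * u k)) * (∑ k, w k * Real.exp (u k)))
      = ∑ i, ∑ j, ∑ k, w i * w j * w k * ((u i - u j) * (u i - u j) * Real.exp (u k)) := by
    rw [sub_mul, HP.tripleProd (fun i => w i * (u i * u i)) w (fun k => w k * Real.exp (u k)),
        HP.tripleProd (fun i => w i * u i) (fun j => w j * u j) (fun k => w k * Real.exp (u k))]
    simp only [← Finset.sum_sub_distrib]
    rw [← HP.sym3 (fun i j k => w i * (u i * u i) * w j * (w k * Real.exp (u k))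
          - w i * u i * (w j * u j) * (w k * Real.exp (u k)))]
    refine Finset.sum_congr rfl fun i _ => Finset.sum_congr rfl fun j _ =>
      Finset.sum_congr rfl fun k _ => by ring
  have hWnn : ∀ i j k : Fin n, (0:ℝ) ≤ w i * w j * w k :=
    fun i j k => mul_nonneg (mul_nonneg (hw i) (hw j)) (hw k)
  have hub : (∑ i, ∑ j, ∑ k, w i * w j * w k * ((u i - u j) * (Real.exp (u i) - Real.exp (u j))))
      ≤ Real.exp η * ∑ i, ∑ j, ∑ k,
          w i * w j * w k * ((u i - u j) * (u i - u j) * Real.exp (u k)) := by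
    rw [Finset.mul_sum]
    refine Finset.sum_le_sum fun i _ => ?_
    rw [Finset.mul_sum]
    refine Finset.sum_le_sum fun j _ => ?_
    rw [Finset.mul_sum]
    refine Finset.sum_le_sum fun k _ => ?_
    calc w i * w j * w k * ((u i - u j) * (Real.exp (u i) - Real.exp (u j)))
        ≤ w i * w j * w k * (Real.exp η * ((u i - u j) * (u i - u j) * Real.exp (u k))) :=
          mul_le_mul_of_nonneg_left
            (HP.scalar_ub (u i) (u j) (u k) η (hη i k) (hη j k)) (hWnn i j k)
      _ = Real.exp η * (w i * w j * w k * ((u i - u j) * (u i - u j) * Real.exp (u k))) := by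
          ring
  have hlb : Real.exp (-η) * (∑ i, ∑ j, ∑ k,
        w i * w j * w k * ((u i - u j) * (u i - u j) * Real.exp (u k)))
      ≤ ∑ i, ∑ j, ∑ k,
          w i * w j * w k * ((u i - u j) * (Real.exp (u i) - Real.exp (u j))) := by
    rw [Finset.mul_sum]
    refine Finset.sum_le_sum fun i _ => ?_
    rw [Finset.mul_sum]
    refine Finset.sum_le_sum fun j _ => ?_
    rw [Finset.mul_sum]
    refine Finset.sum_le_sum fun k _ => ?_
    calc Real.exp (-η) * (w i * w j * w k * ((u i - u j) * (u i - u j) * Real.exp (u k)))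
        = w i * w j * w k * (Real.exp (-η) * ((u i - u j) * (u i - u j) * Real.exp (u k))) := by
          ring
      _ ≤ w i * w j * w k * ((u i - u j) * (Real.exp (u i) - Real.exp (u j))) :=
          mul_le_mul_of_nonneg_left
            (HP.scalar_lb (u i) (u j) (u k) η (hη i k) (hη j k)) (hWnn i j k)
  rw [← hM, ← hN] at hlb hub
  constructor
  · linarith
  · linarith

lemma HP.dotsum {n p : ℕ} (h : Fin p → ℝ) (z : Fin n → Fin p → ℝ) (c : Fin n → ℝ) :
    ∑ j, h j * (∑ k, c k * z k j) = ∑ k, c k * (h ⬝ᵥ z k) := by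
  simp only [Finset.mul_sum]
  rw [Finset.sum_comm]
  refine Finset.sum_congr rfl fun k _ => ?_
  simp only [dotProduct, Finset.mul_sum]
  exact Finset.sum_congr rfl fun j _ => by ring

lemma HP.hmean {n p : ℕ} (z : Fin n → Fin p → ℝ) (a : Fin n → ℝ) (γ h : Fin p → ℝ) :
    ∑ j, h j * wmean z a γ j
      = (∑ k, a k * Real.exp (z k ⬝ᵥ γ) * (h ⬝ᵥ z k)) / wS0 z a γ := by
  unfold wmean
  simp only [← mul_div_assoc]
  rw [← Finset.sum_div]
  congr 1
  exact HP.dotsum h z (fun k => a k * Real.exp (z k ⬝ᵥ γ))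

lemma HP.sum_rot {ι κ : Type*} [Fintype ι] [Fintype κ] (f : ι → ι → κ → ℝ) :
    ∑ i, ∑ j, ∑ k, f i j k = ∑ k, ∑ i, ∑ j, f i j k := by
  calc ∑ i, ∑ j, ∑ k, f i j k = ∑ i, ∑ k, ∑ j, f i j k :=
        Finset.sum_congr rfl fun i _ => Finset.sum_comm
    _ = ∑ k, ∑ i, ∑ j, f i j k := Finset.sum_comm

lemma HP.dotsum2 {n p : ℕ} (h : Fin p → ℝ) (z : Fin n → Fin p → ℝ) (c : Fin n → ℝ) :
    ∑ i, ∑ j, h i * ((∑ k, c k * z k i * z k j) * h j)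
      = ∑ k, c k * ((h ⬝ᵥ z k) * (h ⬝ᵥ z k)) := by
  have e : ∀ i j : Fin p, h i * ((∑ k, c k * z k i * z k j) * h j)
      = ∑ k, c k * ((h i * z k i) * (h j * z k j)) := by
    intro i j
    rw [Finset.sum_mul, Finset.mul_sum]
    exact Finset.sum_congr rfl fun k _ => by ring
  simp only [e]
  rw [HP.sum_rot]
  refine Finset.sum_congr rfl fun k _ => ?_
  simp only [dotProduct]
  rw [Finset.sum_mul_sum]
  rw [Finset.mul_sum]
  refine Finset.sum_congr rfl fun i _ => ?_
  rw [Finset.mul_sum]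

lemma HP.hquad {n p : ℕ} (z : Fin n → Fin p → ℝ) (a : Fin n → ℝ) (β h : Fin p → ℝ) :
    quad (wcov z a β) h
      = (∑ k, a k * Real.exp (z k ⬝ᵥ β) * ((h ⬝ᵥ z k) * (h ⬝ᵥ z k))) / wS0 z a β
        - ((∑ k, a k * Real.exp (z k ⬝ᵥ β) * (h ⬝ᵥ z k)) / wS0 z a β)
          * ((∑ k, a k * Real.exp (z k ⬝ᵥ β) * (h ⬝ᵥ z k)) / wS0 z a β) := by
  unfold quad
  have e1 : h ⬝ᵥ (wcov z a β).mulVec h = ∑ i, ∑ j, h i * (wcov z a β i j * h j) := by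
    simp only [dotProduct, Matrix.mulVec, Finset.mul_sum]
  rw [e1]
  have e2 : ∀ i j : Fin p, h i * (wcov z a β i j * h j)
      = h i * ((∑ k, a k * Real.exp (z k ⬝ᵥ β) * z k i * z k j) * h j) / wS0 z a β
        - (h i * wmean z a β i) * (h j * wmean z a β j) := by
    intro i j
    show h i * (((∑ k, a k * Real.exp (z k ⬝ᵥ β) * z k i * z k j) / wS0 z a β -
      wmean z a β i * wmean z a β j) * h j) = _
    ring
  calc (∑ i, ∑ j, h i * (wcov z a β i j * h j))
      = (∑ i, ∑ j, (h i * ((∑ k, a k * Real.exp (z k ⬝ᵥ β) * z k i * z k j) * h j) / wS0 z a β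
        - (h i * wmean z a β i) * (h j * wmean z a β j))) :=
        Finset.sum_congr rfl fun i _ => Finset.sum_congr rfl fun j _ => e2 i j
    _ = (∑ i, ∑ j, h i * ((∑ k, a k * Real.exp (z k ⬝ᵥ β) * z k i * z k j) * h j) / wS0 z a β)
        - (∑ i, ∑ j, (h i * wmean z a β i) * (h j * wmean z a β j)) := by
        simp only [Finset.sum_sub_distrib]
    _ = (∑ k, a k * Real.exp (z k ⬝ᵥ β) * ((h ⬝ᵥ z k) * (h ⬝ᵥ z k))) / wS0 z a β
        - (∑ i, h i * wmean z a β i) * (∑ j, h j * wmean z a β j) := by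
        congr 1
        · simp only [← Finset.sum_div]
          rw [HP.dotsum2 h z (fun k => a k * Real.exp (z k ⬝ᵥ β))]
        · rw [Finset.sum_mul_sum]
    _ = _ := by rw [HP.hmean]

/-- Hjort–Pollard inequality for a single log-sum-exp term. -/
theorem stmt4 {n p : ℕ} (z : Fin n → Fin p → ℝ) (a : Fin n → ℝ)
    (ha : ∀ k, 0 ≤ a k) (hsum : 0 < ∑ k, a k) (β h : Fin p → ℝ) :
    Real.exp (-(⨆ i : Fin n, ⨆ j : Fin n, |h ⬝ᵥ z i - h ⬝ᵥ z j|)) * quad (wcov z a β) h ≤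
        h ⬝ᵥ (wmean z a (β + h) - wmean z a β) ∧
      h ⬝ᵥ (wmean z a (β + h) - wmean z a β) ≤
        Real.exp (⨆ i : Fin n, ⨆ j : Fin n, |h ⬝ᵥ z i - h ⬝ᵥ z j|) * quad (wcov z a β) h := by
  classical
  set η : ℝ := ⨆ i : Fin n, ⨆ j : Fin n, |h ⬝ᵥ z i - h ⬝ᵥ z j| with hηdef
  set w : Fin n → ℝ := fun k => a k * Real.exp (z k ⬝ᵥ β) with hw
  set u : Fin n → ℝ := fun k => h ⬝ᵥ z k with hu
  have hwnn : ∀ k, 0 ≤ w k := fun k => mul_nonneg (ha k) (Real.exp_pos _).le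
  -- η bounds
  have hη : ∀ i j : Fin n, |u i - u j| ≤ η := by
    intro i j
    have b1 : BddAbove (Set.range fun j : Fin n => |h ⬝ᵥ z i - h ⬝ᵥ z j|) :=
      Set.Finite.bddAbove (Set.finite_range _)
    have b2 : BddAbove (Set.range fun i : Fin n => ⨆ j : Fin n, |h ⬝ᵥ z i - h ⬝ᵥ z j|) :=
      Set.Finite.bddAbove (Set.finite_range _)
    exact le_trans (le_ciSup b1 j) (le_ciSup b2 i)
  -- positivity of the denominators
  have hk : ∃ k, 0 < a k := by
    by_contra hc
    push_neg at hc
    have : ∑ k, a k ≤ 0 := Finset.sum_nonpos fun k _ => hc k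
    linarith
  obtain ⟨k0, hk0⟩ := hk
  have hS0 : (0:ℝ) < ∑ k, w k :=
    Finset.sum_pos' (fun k _ => hwnn k)
      ⟨k0, Finset.mem_univ _, mul_pos hk0 (Real.exp_pos _)⟩
  have hS1 : (0:ℝ) < ∑ k, w k * Real.exp (u k) :=
    Finset.sum_pos' (fun k _ => mul_nonneg (hwnn k) (Real.exp_pos _).le)
      ⟨k0, Finset.mem_univ _, mul_pos (mul_pos hk0 (Real.exp_pos _)) (Real.exp_pos _)⟩
  -- expressing the rescaled exponentials at β + h
  have hβh : ∀ k, a k * Real.exp (z k ⬝ᵥ (β + h)) = w k * Real.exp (u k) := by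
    intro k
    rw [dotProduct_add, dotProduct_comm (z k) h, Real.exp_add, hw, hu]
    ring
  have hwS0β : wS0 z a β = ∑ k, w k := rfl
  have hwS0βh : wS0 z a (β + h) = ∑ k, w k * Real.exp (u k) :=
    Finset.sum_congr rfl fun k _ => hβh k
  -- the directional difference of means
  have hD : h ⬝ᵥ (wmean z a (β + h) - wmean z a β)
      = (∑ k, w k * Real.exp (u k) * u k) / (∑ k, w k * Real.exp (u k))
        - (∑ k, w k * u k) / (∑ k, w k) := by
    have e0 : h ⬝ᵥ (wmean z a (β + h) - wmean z a β)
        = (∑ j, h j * wmean z a (β + h) j) - (∑ j, h j * wmean z a β j) := by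
      simp only [dotProduct, Pi.sub_apply, mul_sub, Finset.sum_sub_distrib]
    rw [e0, HP.hmean, HP.hmean, hwS0β, hwS0βh]
    congr 1
    · congr 1
      refine Finset.sum_congr rfl fun k _ => ?_
      rw [hβh k]
  -- the quadratic form
  have hQ : quad (wcov z a β) h
      = (∑ k, w k * (u k * u k)) / (∑ k, w k)
        - ((∑ k, w k * u k) / (∑ k, w k)) * ((∑ k, w k * u k) / (∑ k, w k)) := by
    rw [HP.hquad, hwS0β]
  obtain ⟨hlb, hub⟩ := HP.core w u hwnn η hη
  rw [hD, hQ]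
  set S0 : ℝ := ∑ k, w k
  set S1 : ℝ := ∑ k, w k * Real.exp (u k)
  set T1 : ℝ := ∑ k, w k * u k
  set T2 : ℝ := ∑ k, w k * (u k * u k)
  set U1 : ℝ := ∑ k, w k * Real.exp (u k) * u k
  have hd : U1 / S1 - T1 / S0 = (U1 * S0 - T1 * S1) / (S1 * S0) := by
    field_simp
  have hq : T2 / S0 - (T1 / S0) * (T1 / S0) = (T2 * S0 - T1 * T1) / (S0 * S0) := by
    field_simp
  rw [hd, hq]
  constructor
  · rw [mul_div_assoc', div_le_div_iff₀ (by positivity) (by positivity)]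
    nlinarith [mul_le_mul_of_nonneg_right hlb hS0.le]
  · rw [mul_div_assoc', div_le_div_iff₀ (by positivity) (by positivity)]
    nlinarith [mul_le_mul_of_nonneg_right hub hS0.le]
end

section
/- Fix a fixed-design Cox partial likelihood with score U and information matrix J. For every β, h ∈ ℝ^p, setting η_h := max_{1≤i,j≤n} |hᵀz_i − hᵀz_j|, it holds that e^{−η_h} hᵀJ(β)h ≤ hᵀ(U(β) − U(β+h)) ≤ e^{η_h} hᵀJ(β)h. -/
open Matrix Finset

/-- `S⁰_i(β) = Σ_{k ∈ R_i} exp(z_kᵀβ)` for the fixed-design Cox partial likelihood. -/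
noncomputable def coxS0 {n p : ℕ} (z : Fin n → Fin p → ℝ) (R : Fin n → Finset (Fin n))
    (i : Fin n) (β : Fin p → ℝ) : ℝ :=
  ∑ k ∈ R i, Real.exp (z k ⬝ᵥ β)

/-- The score `U(β) = (1/n) Σ_{i ∈ D} (z_i − S¹_i(β)/S⁰_i(β))`. -/
noncomputable def coxU {n p : ℕ} (z : Fin n → Fin p → ℝ) (D : Finset (Fin n))
    (R : Fin n → Finset (Fin n)) (β : Fin p → ℝ) : Fin p → ℝ :=
  fun j => (n : ℝ)⁻¹ *
    ∑ i ∈ D, (z i j - (∑ k ∈ R i, Real.exp (z k ⬝ᵥ β) * z k j) / coxS0 z R i β)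

/-- The information matrix
`J(β) = (1/n) Σ_{i ∈ D} (S²_i(β)/S⁰_i(β) − (S¹_i(β)/S⁰_i(β))(S¹_i(β)/S⁰_i(β))ᵀ)`. -/
noncomputable def coxJ {n p : ℕ} (z : Fin n → Fin p → ℝ) (D : Finset (Fin n))
    (R : Fin n → Finset (Fin n)) (β : Fin p → ℝ) : Matrix (Fin p) (Fin p) ℝ :=
  fun a b => (n : ℝ)⁻¹ *
    ∑ i ∈ D,
      ((∑ k ∈ R i, Real.exp (z k ⬝ᵥ β) * z k a * z k b) / coxS0 z R i β -
        ((∑ k ∈ R i, Real.exp (z k ⬝ᵥ β) * z k a) / coxS0 z R i β) *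
          ((∑ k ∈ R i, Real.exp (z k ⬝ᵥ β) * z k b) / coxS0 z R i β))


lemma exp_pair_bounds (x y c η : ℝ) (hx : |x - c| ≤ η) (hy : |y - c| ≤ η) :
    Real.exp (c - η) * ((x - y) * (x - y)) ≤ (x - y) * (Real.exp x - Real.exp y) ∧
      (x - y) * (Real.exp x - Real.exp y) ≤ Real.exp (c + η) * ((x - y) * (x - y)) := by
  rw [abs_le] at hx hy
  have e1 : Real.exp (c - η) ≤ Real.exp x := Real.exp_le_exp.mpr (by linarith)
  have e2 : Real.exp (c - η) ≤ Real.exp y := Real.exp_le_exp.mpr (by linarith)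
  have e3 : Real.exp x ≤ Real.exp (c + η) := Real.exp_le_exp.mpr (by linarith)
  have e4 : Real.exp y ≤ Real.exp (c + η) := Real.exp_le_exp.mpr (by linarith)
  have m1 : Real.exp y * ((x - y) + 1) ≤ Real.exp x := by
    have h := mul_le_mul_of_nonneg_left (Real.add_one_le_exp (x - y)) (Real.exp_pos y).le
    calc Real.exp y * ((x - y) + 1) ≤ Real.exp y * Real.exp (x - y) := h
      _ = Real.exp x := by rw [← Real.exp_add]; ring_nf
  have m2 : Real.exp x * ((y - x) + 1) ≤ Real.exp y := by
    have h := mul_le_mul_of_nonneg_left (Real.add_one_le_exp (y - x)) (Real.exp_pos x).le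
    calc Real.exp x * ((y - x) + 1) ≤ Real.exp x * Real.exp (y - x) := h
      _ = Real.exp y := by rw [← Real.exp_add]; ring_nf
  rcases le_total y x with hxy | hxy
  · exact ⟨by nlinarith [sq_nonneg (x - y)], by nlinarith [sq_nonneg (x - y)]⟩
  · exact ⟨by nlinarith [sq_nonneg (x - y)], by nlinarith [sq_nonneg (x - y)]⟩

lemma double_sum_id {ι : Type*} (s : Finset ι) (w f g : ι → ℝ) :
    ∑ k ∈ s, ∑ l ∈ s, w k * w l * ((f k - f l) * (g k - g l)) =
      2 * ((∑ k ∈ s, w k * (f k * g k)) * (∑ k ∈ s, w k) -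
        (∑ k ∈ s, w k * f k) * (∑ k ∈ s, w k * g k)) := by
  have key : ∀ k ∈ s, ∑ l ∈ s, w k * w l * ((f k - f l) * (g k - g l)) =
      (w k * (f k * g k)) * ∑ l ∈ s, w l
        + w k * ∑ l ∈ s, w l * (f l * g l)
        - (w k * f k) * ∑ l ∈ s, w l * g l
        - (w k * g k) * ∑ l ∈ s, w l * f l := by
    intro k _
    rw [Finset.mul_sum, Finset.mul_sum, Finset.mul_sum, Finset.mul_sum,
      ← Finset.sum_add_distrib, ← Finset.sum_sub_distrib, ← Finset.sum_sub_distrib]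
    exact Finset.sum_congr rfl fun l _ => by ring
  rw [Finset.sum_congr rfl key]
  rw [Finset.sum_sub_distrib, Finset.sum_sub_distrib, Finset.sum_add_distrib,
    ← Finset.sum_mul, ← Finset.sum_mul, ← Finset.sum_mul, ← Finset.sum_mul]
  ring

lemma triple_pull {ι : Type*} (s : Finset ι) (c : ι → ℝ) (F : ι → ι → ℝ) :
    ∑ m ∈ s, ∑ k ∈ s, ∑ l ∈ s, c m * F k l =
      (∑ m ∈ s, c m) * ∑ k ∈ s, ∑ l ∈ s, F k l := by
  rw [Finset.sum_mul]
  exact Finset.sum_congr rfl fun m _ => by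
    rw [Finset.mul_sum]
    exact Finset.sum_congr rfl fun k _ => (Finset.mul_sum _ _ _).symm

lemma per_i {ι : Type*} (s : Finset ι) (hs : s.Nonempty) (w a : ι → ℝ)
    (hw : ∀ k, 0 < w k) (η : ℝ) (ha : ∀ k ∈ s, ∀ l ∈ s, |a k - a l| ≤ η) :
    Real.exp (-η) * ((∑ k ∈ s, w k * a k ^ 2) / (∑ k ∈ s, w k) -
        ((∑ k ∈ s, w k * a k) / (∑ k ∈ s, w k)) ^ 2) ≤
      (∑ k ∈ s, w k * Real.exp (a k) * a k) / (∑ k ∈ s, w k * Real.exp (a k)) -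
        (∑ k ∈ s, w k * a k) / (∑ k ∈ s, w k) ∧
    (∑ k ∈ s, w k * Real.exp (a k) * a k) / (∑ k ∈ s, w k * Real.exp (a k)) -
        (∑ k ∈ s, w k * a k) / (∑ k ∈ s, w k) ≤
      Real.exp η * ((∑ k ∈ s, w k * a k ^ 2) / (∑ k ∈ s, w k) -
        ((∑ k ∈ s, w k * a k) / (∑ k ∈ s, w k)) ^ 2) := by
  have hd1 : ∑ k ∈ s, ∑ l ∈ s, w k * w l * ((a k - a l) * (Real.exp (a k) - Real.exp (a l)))
      = 2 * ((∑ k ∈ s, w k * Real.exp (a k) * a k) * (∑ k ∈ s, w k) -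
          (∑ k ∈ s, w k * a k) * (∑ k ∈ s, w k * Real.exp (a k))) := by
    rw [double_sum_id s w a (fun k => Real.exp (a k)),
      show (∑ k ∈ s, w k * (a k * Real.exp (a k))) = ∑ k ∈ s, w k * Real.exp (a k) * a k from
        Finset.sum_congr rfl fun k _ => by ring]
  have hd2 : ∑ k ∈ s, ∑ l ∈ s, w k * w l * ((a k - a l) * (a k - a l))
      = 2 * ((∑ k ∈ s, w k * a k ^ 2) * (∑ k ∈ s, w k) -
          (∑ k ∈ s, w k * a k) * (∑ k ∈ s, w k * a k)) := by
    rw [double_sum_id s w a a,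
      show (∑ k ∈ s, w k * (a k * a k)) = ∑ k ∈ s, w k * a k ^ 2 from
        Finset.sum_congr rfl fun k _ => by ring]
  set S0 := ∑ k ∈ s, w k with hS0def
  set S1 := ∑ k ∈ s, w k * a k with hS1def
  set S2 := ∑ k ∈ s, w k * a k ^ 2 with hS2def
  set T0 := ∑ k ∈ s, w k * Real.exp (a k) with hT0def
  set T1 := ∑ k ∈ s, w k * Real.exp (a k) * a k with hT1def
  have hS0 : 0 < S0 := Finset.sum_pos (fun k _ => hw k) hs
  have hT0 : 0 < T0 := Finset.sum_pos (fun k _ => mul_pos (hw k) (Real.exp_pos _)) hs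
  have core : ∀ m ∈ s, ∀ k ∈ s, ∀ l ∈ s,
      (w m * Real.exp (a m)) * (Real.exp (-η) * (w k * w l * ((a k - a l) * (a k - a l)))) ≤
        w m * (w k * w l * ((a k - a l) * (Real.exp (a k) - Real.exp (a l)))) ∧
      w m * (w k * w l * ((a k - a l) * (Real.exp (a k) - Real.exp (a l)))) ≤
        (w m * Real.exp (a m)) * (Real.exp η * (w k * w l * ((a k - a l) * (a k - a l)))) := by
    intro m hm k hk l hl
    obtain ⟨lo, hi⟩ := exp_pair_bounds (a k) (a l) (a m) η (ha k hk m hm) (ha l hl m hm)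
    have hkl : (0:ℝ) < w k * w l := mul_pos (hw k) (hw l)
    have elo : (w m * Real.exp (a m)) * (Real.exp (-η) * (w k * w l * ((a k - a l) * (a k - a l))))
        = w m * ((w k * w l) * (Real.exp (a m - η) * ((a k - a l) * (a k - a l)))) := by
      rw [show a m - η = a m + -η by ring, Real.exp_add]; ring
    have ehi : (w m * Real.exp (a m)) * (Real.exp η * (w k * w l * ((a k - a l) * (a k - a l))))
        = w m * ((w k * w l) * (Real.exp (a m + η) * ((a k - a l) * (a k - a l)))) := by
      rw [Real.exp_add]; ring
    constructor
    · rw [elo]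
      exact mul_le_mul_of_nonneg_left (mul_le_mul_of_nonneg_left lo hkl.le) (hw m).le
    · rw [ehi]
      exact mul_le_mul_of_nonneg_left (mul_le_mul_of_nonneg_left hi hkl.le) (hw m).le
  have tri_lo : T0 * (Real.exp (-η) * (2 * (S2 * S0 - S1 * S1))) ≤ S0 * (2 * (T1 * S0 - S1 * T0)) := by
    have step := Finset.sum_le_sum (s := s) fun m hm =>
      Finset.sum_le_sum (s := s) fun k hk =>
        Finset.sum_le_sum (s := s) fun l hl => (core m hm k hk l hl).1
    rw [triple_pull s (fun m => w m * Real.exp (a m))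
        (fun k l => Real.exp (-η) * (w k * w l * ((a k - a l) * (a k - a l)))),
      triple_pull s w
        (fun k l => w k * w l * ((a k - a l) * (Real.exp (a k) - Real.exp (a l)))),
      hd1] at step
    have e2 : ∑ k ∈ s, ∑ l ∈ s, Real.exp (-η) * (w k * w l * ((a k - a l) * (a k - a l)))
        = Real.exp (-η) * (2 * (S2 * S0 - S1 * S1)) := by
      rw [← hd2, Finset.mul_sum]
      exact Finset.sum_congr rfl fun k _ => (Finset.mul_sum _ _ _).symm
    rw [e2] at step
    exact step
  have tri_hi : S0 * (2 * (T1 * S0 - S1 * T0)) ≤ T0 * (Real.exp η * (2 * (S2 * S0 - S1 * S1))) := by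
    have step := Finset.sum_le_sum (s := s) fun m hm =>
      Finset.sum_le_sum (s := s) fun k hk =>
        Finset.sum_le_sum (s := s) fun l hl => (core m hm k hk l hl).2
    rw [triple_pull s (fun m => w m * Real.exp (a m))
        (fun k l => Real.exp η * (w k * w l * ((a k - a l) * (a k - a l)))),
      triple_pull s w
        (fun k l => w k * w l * ((a k - a l) * (Real.exp (a k) - Real.exp (a l)))),
      hd1] at step
    have e2 : ∑ k ∈ s, ∑ l ∈ s, Real.exp η * (w k * w l * ((a k - a l) * (a k - a l)))
        = Real.exp η * (2 * (S2 * S0 - S1 * S1)) := by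
      rw [← hd2, Finset.mul_sum]
      exact Finset.sum_congr rfl fun k _ => (Finset.mul_sum _ _ _).symm
    rw [e2] at step
    exact step
  have lhs_lo : Real.exp (-η) * (S2 / S0 - (S1 / S0) ^ 2)
      = (Real.exp (-η) * (S2 * S0 - S1 * S1)) / S0 ^ 2 := by
    field_simp
  have lhs_hi : Real.exp η * (S2 / S0 - (S1 / S0) ^ 2)
      = (Real.exp η * (S2 * S0 - S1 * S1)) / S0 ^ 2 := by
    field_simp
  have rhs_eq : T1 / T0 - S1 / S0 = (T1 * S0 - T0 * S1) / (T0 * S0) :=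
    div_sub_div _ _ (ne_of_gt hT0) (ne_of_gt hS0)
  constructor
  · rw [lhs_lo, rhs_eq, div_le_div_iff₀ (by positivity) (by positivity)]
    nlinarith [mul_le_mul_of_nonneg_right tri_lo hS0.le]
  · rw [rhs_eq, lhs_hi, div_le_div_iff₀ (by positivity) (by positivity)]
    nlinarith [mul_le_mul_of_nonneg_right tri_hi hS0.le]

section helpers
variable {n p : ℕ} (z : Fin n → Fin p → ℝ) (h : Fin p → ℝ)

lemma swap_dot (s : Finset (Fin n)) (g : Fin n → ℝ) :
    (∑ j : Fin p, h j * ∑ k ∈ s, g k * z k j) = ∑ k ∈ s, g k * (h ⬝ᵥ z k) := by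
  calc ∑ j : Fin p, h j * ∑ k ∈ s, g k * z k j
      = ∑ j : Fin p, ∑ k ∈ s, h j * (g k * z k j) :=
        Finset.sum_congr rfl fun j _ => Finset.mul_sum _ _ _
    _ = ∑ k ∈ s, ∑ j : Fin p, h j * (g k * z k j) := Finset.sum_comm
    _ = ∑ k ∈ s, g k * (h ⬝ᵥ z k) := Finset.sum_congr rfl fun k _ => by
        rw [dotProduct, Finset.mul_sum]
        exact Finset.sum_congr rfl fun j _ => by ring

lemma swap_dot_div (s : Finset (Fin n)) (g : Fin n → ℝ) (S : ℝ) :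
    (∑ j : Fin p, h j * ((∑ k ∈ s, g k * z k j) / S)) = (∑ k ∈ s, g k * (h ⬝ᵥ z k)) / S := by
  calc ∑ j : Fin p, h j * ((∑ k ∈ s, g k * z k j) / S)
      = ∑ j : Fin p, (h j * ∑ k ∈ s, g k * z k j) / S :=
        Finset.sum_congr rfl fun j _ => (mul_div_assoc _ _ _).symm
    _ = (∑ j : Fin p, h j * ∑ k ∈ s, g k * z k j) / S := (Finset.sum_div _ _ _).symm
    _ = _ := by rw [swap_dot]

lemma quad_L1 (s : Finset (Fin n)) (w : Fin n → ℝ) :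
    (∑ c : Fin p, ∑ b : Fin p, (∑ k ∈ s, w k * z k c * z k b) * (h c * h b)) =
      ∑ k ∈ s, w k * (h ⬝ᵥ z k) ^ 2 := by
  calc ∑ c : Fin p, ∑ b : Fin p, (∑ k ∈ s, w k * z k c * z k b) * (h c * h b)
      = ∑ c : Fin p, ∑ b : Fin p, ∑ k ∈ s, w k * ((h c * z k c) * (h b * z k b)) := by
        refine Finset.sum_congr rfl fun c _ => Finset.sum_congr rfl fun b _ => ?_
        rw [Finset.sum_mul]
        exact Finset.sum_congr rfl fun k _ => by ring
    _ = ∑ c : Fin p, ∑ k ∈ s, ∑ b : Fin p, w k * ((h c * z k c) * (h b * z k b)) :=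
        Finset.sum_congr rfl fun c _ => Finset.sum_comm
    _ = ∑ k ∈ s, ∑ c : Fin p, ∑ b : Fin p, w k * ((h c * z k c) * (h b * z k b)) :=
        Finset.sum_comm
    _ = ∑ k ∈ s, w k * (h ⬝ᵥ z k) ^ 2 := by
        refine Finset.sum_congr rfl fun k _ => ?_
        calc ∑ c : Fin p, ∑ b : Fin p, w k * ((h c * z k c) * (h b * z k b))
            = w k * ∑ c : Fin p, ∑ b : Fin p, (h c * z k c) * (h b * z k b) := by
              rw [Finset.mul_sum]
              exact Finset.sum_congr rfl fun c _ => (Finset.mul_sum _ _ _).symm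
          _ = w k * ((∑ c : Fin p, h c * z k c) * (∑ b : Fin p, h b * z k b)) := by
              rw [Finset.sum_mul_sum]
          _ = w k * (h ⬝ᵥ z k) ^ 2 := by rw [dotProduct]; ring

end helpers

section main
variable {n p : ℕ} (z : Fin n → Fin p → ℝ) (D : Finset (Fin n))
    (R : Fin n → Finset (Fin n)) (h : Fin p → ℝ)

lemma hUeq (γ : Fin p → ℝ) : h ⬝ᵥ coxU z D R γ = (n:ℝ)⁻¹ *
    ∑ i ∈ D, ((h ⬝ᵥ z i) -
      (∑ k ∈ R i, Real.exp (z k ⬝ᵥ γ) * (h ⬝ᵥ z k)) / coxS0 z R i γ) := by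
  rw [dotProduct]
  simp only [coxU]
  calc ∑ j : Fin p, h j * ((n:ℝ)⁻¹ *
        ∑ i ∈ D, (z i j - (∑ k ∈ R i, Real.exp (z k ⬝ᵥ γ) * z k j) / coxS0 z R i γ))
      = (n:ℝ)⁻¹ * ∑ j : Fin p, h j *
        ∑ i ∈ D, (z i j - (∑ k ∈ R i, Real.exp (z k ⬝ᵥ γ) * z k j) / coxS0 z R i γ) := by
        rw [Finset.mul_sum]
        exact Finset.sum_congr rfl fun j _ => by ring
    _ = (n:ℝ)⁻¹ * ∑ j : Fin p, ∑ i ∈ D,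
        (h j * z i j - h j * ((∑ k ∈ R i, Real.exp (z k ⬝ᵥ γ) * z k j) / coxS0 z R i γ)) := by
        congr 1
        refine Finset.sum_congr rfl fun j _ => ?_
        rw [Finset.mul_sum]
        exact Finset.sum_congr rfl fun i _ => by ring
    _ = (n:ℝ)⁻¹ * ∑ i ∈ D, ∑ j : Fin p,
        (h j * z i j - h j * ((∑ k ∈ R i, Real.exp (z k ⬝ᵥ γ) * z k j) / coxS0 z R i γ)) := by
        rw [Finset.sum_comm]
    _ = (n:ℝ)⁻¹ * ∑ i ∈ D, ((h ⬝ᵥ z i) -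
        (∑ k ∈ R i, Real.exp (z k ⬝ᵥ γ) * (h ⬝ᵥ z k)) / coxS0 z R i γ) := by
        congr 1
        refine Finset.sum_congr rfl fun i _ => ?_
        rw [Finset.sum_sub_distrib, swap_dot_div, dotProduct]

lemma hJeq (β : Fin p → ℝ) : quad (coxJ z D R β) h = (n:ℝ)⁻¹ *
    ∑ i ∈ D, ((∑ k ∈ R i, Real.exp (z k ⬝ᵥ β) * (h ⬝ᵥ z k) ^ 2) / coxS0 z R i β -
      ((∑ k ∈ R i, Real.exp (z k ⬝ᵥ β) * (h ⬝ᵥ z k)) / coxS0 z R i β) ^ 2) := by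
  rw [quad, dotProduct]
  simp only [Matrix.mulVec, dotProduct, coxJ]
  calc ∑ c : Fin p, h c * ∑ b : Fin p, ((n:ℝ)⁻¹ * ∑ i ∈ D,
        ((∑ k ∈ R i, Real.exp (z k ⬝ᵥ β) * z k c * z k b) / coxS0 z R i β -
          ((∑ k ∈ R i, Real.exp (z k ⬝ᵥ β) * z k c) / coxS0 z R i β) *
            ((∑ k ∈ R i, Real.exp (z k ⬝ᵥ β) * z k b) / coxS0 z R i β))) * h b
      = (n:ℝ)⁻¹ * ∑ c : Fin p, ∑ b : Fin p, ∑ i ∈ D,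
        (((∑ k ∈ R i, Real.exp (z k ⬝ᵥ β) * z k c * z k b) / coxS0 z R i β -
          ((∑ k ∈ R i, Real.exp (z k ⬝ᵥ β) * z k c) / coxS0 z R i β) *
            ((∑ k ∈ R i, Real.exp (z k ⬝ᵥ β) * z k b) / coxS0 z R i β)) * (h c * h b)) := by
        rw [Finset.mul_sum]
        refine Finset.sum_congr rfl fun c _ => ?_
        rw [Finset.mul_sum, Finset.mul_sum]
        refine Finset.sum_congr rfl fun b _ => ?_
        calc h c * (((n:ℝ)⁻¹ * ∑ i ∈ D, _) * h b)
            = (n:ℝ)⁻¹ * ((∑ i ∈ D,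
              ((∑ k ∈ R i, Real.exp (z k ⬝ᵥ β) * z k c * z k b) / coxS0 z R i β -
                ((∑ k ∈ R i, Real.exp (z k ⬝ᵥ β) * z k c) / coxS0 z R i β) *
                  ((∑ k ∈ R i, Real.exp (z k ⬝ᵥ β) * z k b) / coxS0 z R i β))) * (h c * h b)) := by
              ring
          _ = (n:ℝ)⁻¹ * ∑ i ∈ D,
              (((∑ k ∈ R i, Real.exp (z k ⬝ᵥ β) * z k c * z k b) / coxS0 z R i β -
                ((∑ k ∈ R i, Real.exp (z k ⬝ᵥ β) * z k c) / coxS0 z R i β) *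
                  ((∑ k ∈ R i, Real.exp (z k ⬝ᵥ β) * z k b) / coxS0 z R i β)) * (h c * h b)) := by
              rw [Finset.sum_mul]
    _ = (n:ℝ)⁻¹ * ∑ c : Fin p, ∑ i ∈ D, ∑ b : Fin p,
        (((∑ k ∈ R i, Real.exp (z k ⬝ᵥ β) * z k c * z k b) / coxS0 z R i β -
          ((∑ k ∈ R i, Real.exp (z k ⬝ᵥ β) * z k c) / coxS0 z R i β) *
            ((∑ k ∈ R i, Real.exp (z k ⬝ᵥ β) * z k b) / coxS0 z R i β)) * (h c * h b)) := by
        congr 1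
        exact Finset.sum_congr rfl fun c _ => Finset.sum_comm
    _ = (n:ℝ)⁻¹ * ∑ i ∈ D, ∑ c : Fin p, ∑ b : Fin p,
        (((∑ k ∈ R i, Real.exp (z k ⬝ᵥ β) * z k c * z k b) / coxS0 z R i β -
          ((∑ k ∈ R i, Real.exp (z k ⬝ᵥ β) * z k c) / coxS0 z R i β) *
            ((∑ k ∈ R i, Real.exp (z k ⬝ᵥ β) * z k b) / coxS0 z R i β)) * (h c * h b)) := by
        rw [Finset.sum_comm]
    _ = (n:ℝ)⁻¹ * ∑ i ∈ D,
        ((∑ k ∈ R i, Real.exp (z k ⬝ᵥ β) * (h ⬝ᵥ z k) ^ 2) / coxS0 z R i β -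
          ((∑ k ∈ R i, Real.exp (z k ⬝ᵥ β) * (h ⬝ᵥ z k)) / coxS0 z R i β) ^ 2) := by
        congr 1
        refine Finset.sum_congr rfl fun i _ => ?_
        have split : ∀ c, (∑ b : Fin p,
            (((∑ k ∈ R i, Real.exp (z k ⬝ᵥ β) * z k c * z k b) / coxS0 z R i β -
              ((∑ k ∈ R i, Real.exp (z k ⬝ᵥ β) * z k c) / coxS0 z R i β) *
                ((∑ k ∈ R i, Real.exp (z k ⬝ᵥ β) * z k b) / coxS0 z R i β)) * (h c * h b)))
            = (∑ b : Fin p, ((∑ k ∈ R i, Real.exp (z k ⬝ᵥ β) * z k c * z k b) * (h c * h b)) / coxS0 z R i β)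
              - (h c * ((∑ k ∈ R i, Real.exp (z k ⬝ᵥ β) * z k c) / coxS0 z R i β)) *
                ∑ b : Fin p, h b * ((∑ k ∈ R i, Real.exp (z k ⬝ᵥ β) * z k b) / coxS0 z R i β) := by
          intro c
          rw [Finset.mul_sum, ← Finset.sum_sub_distrib]
          exact Finset.sum_congr rfl fun b _ => by ring
        rw [Finset.sum_congr rfl fun c _ => split c, Finset.sum_sub_distrib, ← Finset.sum_mul]
        have e1 : (∑ c : Fin p, ∑ b : Fin p,
            ((∑ k ∈ R i, Real.exp (z k ⬝ᵥ β) * z k c * z k b) * (h c * h b)) / coxS0 z R i β)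
            = (∑ k ∈ R i, Real.exp (z k ⬝ᵥ β) * (h ⬝ᵥ z k) ^ 2) / coxS0 z R i β := by
          rw [← quad_L1 z h (R i) (fun k => Real.exp (z k ⬝ᵥ β)), Finset.sum_div]
          exact Finset.sum_congr rfl fun c _ => (Finset.sum_div _ _ _).symm
        have e2 : (∑ c : Fin p, h c * ((∑ k ∈ R i, Real.exp (z k ⬝ᵥ β) * z k c) / coxS0 z R i β))
            = (∑ k ∈ R i, Real.exp (z k ⬝ᵥ β) * (h ⬝ᵥ z k)) / coxS0 z R i β :=
          swap_dot_div z h (R i) _ _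
        rw [e1, e2]
        ring_nf

end main

/-- Hjort–Pollard inequality for the Cox score and information.
With `η_h = max_{i,j} |hᵀz_i − hᵀz_j|`,
`e^{−η_h} hᵀJ(β)h ≤ hᵀ(U(β) − U(β+h)) ≤ e^{η_h} hᵀJ(β)h`. -/
theorem stmt5 {n p : ℕ} (z : Fin n → Fin p → ℝ) (D : Finset (Fin n))
    (R : Fin n → Finset (Fin n)) (hR : ∀ i ∈ D, (R i).Nonempty) (β h : Fin p → ℝ) :
    Real.exp (-(⨆ i : Fin n, ⨆ j : Fin n, |h ⬝ᵥ z i - h ⬝ᵥ z j|)) * quad (coxJ z D R β) h ≤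
        h ⬝ᵥ (coxU z D R β - coxU z D R (β + h)) ∧
      h ⬝ᵥ (coxU z D R β - coxU z D R (β + h)) ≤
        Real.exp (⨆ i : Fin n, ⨆ j : Fin n, |h ⬝ᵥ z i - h ⬝ᵥ z j|) * quad (coxJ z D R β) h := by
  set η := ⨆ i : Fin n, ⨆ j : Fin n, |h ⬝ᵥ z i - h ⬝ᵥ z j| with hηdef
  have hbdd : ∀ k l : Fin n, |h ⬝ᵥ z k - h ⬝ᵥ z l| ≤ η := by
    intro k l
    have h1 : |h ⬝ᵥ z k - h ⬝ᵥ z l| ≤ ⨆ j : Fin n, |h ⬝ᵥ z k - h ⬝ᵥ z j| :=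
      le_ciSup (f := fun j : Fin n => |h ⬝ᵥ z k - h ⬝ᵥ z j|)
        (Set.Finite.bddAbove (Set.finite_range _)) l
    exact h1.trans (le_ciSup (f := fun i => ⨆ j : Fin n, |h ⬝ᵥ z i - h ⬝ᵥ z j|)
      (Set.Finite.bddAbove (Set.finite_range _)) k)
  have hdiff : h ⬝ᵥ (coxU z D R β - coxU z D R (β + h)) = (n:ℝ)⁻¹ *
      ∑ i ∈ D, ((∑ k ∈ R i, Real.exp (z k ⬝ᵥ β) * Real.exp (h ⬝ᵥ z k) * (h ⬝ᵥ z k)) /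
          (∑ k ∈ R i, Real.exp (z k ⬝ᵥ β) * Real.exp (h ⬝ᵥ z k)) -
        (∑ k ∈ R i, Real.exp (z k ⬝ᵥ β) * (h ⬝ᵥ z k)) / coxS0 z R i β) := by
    rw [dotProduct_sub, hUeq z D R h β, hUeq z D R h (β + h), ← mul_sub,
      ← Finset.sum_sub_distrib]
    congr 1
    refine Finset.sum_congr rfl fun i _ => ?_
    have e1 : ∀ k : Fin n, Real.exp (z k ⬝ᵥ (β + h)) =
        Real.exp (z k ⬝ᵥ β) * Real.exp (h ⬝ᵥ z k) := by
      intro k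
      rw [← Real.exp_add, dotProduct_add, dotProduct_comm (z k) h]
    have e2 : coxS0 z R i (β + h) = ∑ k ∈ R i, Real.exp (z k ⬝ᵥ β) * Real.exp (h ⬝ᵥ z k) :=
      Finset.sum_congr rfl fun k _ => e1 k
    have e3 : (∑ k ∈ R i, Real.exp (z k ⬝ᵥ (β + h)) * (h ⬝ᵥ z k)) =
        ∑ k ∈ R i, Real.exp (z k ⬝ᵥ β) * Real.exp (h ⬝ᵥ z k) * (h ⬝ᵥ z k) :=
      Finset.sum_congr rfl fun k _ => by rw [e1 k]
    rw [e2, e3]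
    ring
  have hquad := hJeq z D R h β
  have hn : (0:ℝ) ≤ (n:ℝ)⁻¹ := by positivity
  have perI : ∀ i ∈ D,
      (Real.exp (-η) * ((∑ k ∈ R i, Real.exp (z k ⬝ᵥ β) * (h ⬝ᵥ z k) ^ 2) / coxS0 z R i β -
          ((∑ k ∈ R i, Real.exp (z k ⬝ᵥ β) * (h ⬝ᵥ z k)) / coxS0 z R i β) ^ 2) ≤
        (∑ k ∈ R i, Real.exp (z k ⬝ᵥ β) * Real.exp (h ⬝ᵥ z k) * (h ⬝ᵥ z k)) /
            (∑ k ∈ R i, Real.exp (z k ⬝ᵥ β) * Real.exp (h ⬝ᵥ z k)) -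
          (∑ k ∈ R i, Real.exp (z k ⬝ᵥ β) * (h ⬝ᵥ z k)) / coxS0 z R i β) ∧
      ((∑ k ∈ R i, Real.exp (z k ⬝ᵥ β) * Real.exp (h ⬝ᵥ z k) * (h ⬝ᵥ z k)) /
            (∑ k ∈ R i, Real.exp (z k ⬝ᵥ β) * Real.exp (h ⬝ᵥ z k)) -
          (∑ k ∈ R i, Real.exp (z k ⬝ᵥ β) * (h ⬝ᵥ z k)) / coxS0 z R i β ≤
        Real.exp η * ((∑ k ∈ R i, Real.exp (z k ⬝ᵥ β) * (h ⬝ᵥ z k) ^ 2) / coxS0 z R i β -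
          ((∑ k ∈ R i, Real.exp (z k ⬝ᵥ β) * (h ⬝ᵥ z k)) / coxS0 z R i β) ^ 2)) := by
    intro i hi
    exact per_i (R i) (hR i hi) (fun k => Real.exp (z k ⬝ᵥ β)) (fun k => h ⬝ᵥ z k)
      (fun k => Real.exp_pos _) η (fun k _ l _ => hbdd k l)
  constructor
  · rw [hdiff, hquad]
    calc Real.exp (-η) * ((n:ℝ)⁻¹ * ∑ i ∈ D,
          ((∑ k ∈ R i, Real.exp (z k ⬝ᵥ β) * (h ⬝ᵥ z k) ^ 2) / coxS0 z R i β -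
            ((∑ k ∈ R i, Real.exp (z k ⬝ᵥ β) * (h ⬝ᵥ z k)) / coxS0 z R i β) ^ 2))
        = (n:ℝ)⁻¹ * ∑ i ∈ D, Real.exp (-η) *
          ((∑ k ∈ R i, Real.exp (z k ⬝ᵥ β) * (h ⬝ᵥ z k) ^ 2) / coxS0 z R i β -
            ((∑ k ∈ R i, Real.exp (z k ⬝ᵥ β) * (h ⬝ᵥ z k)) / coxS0 z R i β) ^ 2) := by
          simp only [Finset.mul_sum]
          exact Finset.sum_congr rfl fun i _ => by ring
      _ ≤ (n:ℝ)⁻¹ * ∑ i ∈ D,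
          ((∑ k ∈ R i, Real.exp (z k ⬝ᵥ β) * Real.exp (h ⬝ᵥ z k) * (h ⬝ᵥ z k)) /
              (∑ k ∈ R i, Real.exp (z k ⬝ᵥ β) * Real.exp (h ⬝ᵥ z k)) -
            (∑ k ∈ R i, Real.exp (z k ⬝ᵥ β) * (h ⬝ᵥ z k)) / coxS0 z R i β) :=
          mul_le_mul_of_nonneg_left
            (Finset.sum_le_sum fun i hi => (perI i hi).1) hn
  · rw [hdiff, hquad]
    calc (n:ℝ)⁻¹ * ∑ i ∈ D,
          ((∑ k ∈ R i, Real.exp (z k ⬝ᵥ β) * Real.exp (h ⬝ᵥ z k) * (h ⬝ᵥ z k)) /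
              (∑ k ∈ R i, Real.exp (z k ⬝ᵥ β) * Real.exp (h ⬝ᵥ z k)) -
            (∑ k ∈ R i, Real.exp (z k ⬝ᵥ β) * (h ⬝ᵥ z k)) / coxS0 z R i β)
        ≤ (n:ℝ)⁻¹ * ∑ i ∈ D, Real.exp η *
          ((∑ k ∈ R i, Real.exp (z k ⬝ᵥ β) * (h ⬝ᵥ z k) ^ 2) / coxS0 z R i β -
            ((∑ k ∈ R i, Real.exp (z k ⬝ᵥ β) * (h ⬝ᵥ z k)) / coxS0 z R i β) ^ 2) :=
          mul_le_mul_of_nonneg_left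
            (Finset.sum_le_sum fun i hi => (perI i hi).2) hn
      _ = Real.exp η * ((n:ℝ)⁻¹ * ∑ i ∈ D,
          ((∑ k ∈ R i, Real.exp (z k ⬝ᵥ β) * (h ⬝ᵥ z k) ^ 2) / coxS0 z R i β -
            ((∑ k ∈ R i, Real.exp (z k ⬝ᵥ β) * (h ⬝ᵥ z k)) / coxS0 z R i β) ^ 2)) := by
          simp only [Finset.mul_sum]
          exact Finset.sum_congr rfl fun i _ => by ring
end

section
/- Fix a fixed-design Cox partial likelihood with score U and information matrix J, and suppose the covariates are uniformly bounded: |z_i^j| ≤ K₁ for all i ∈ {1,…,n} and j ∈ {1,…,p}. Let β₀, β̂ ∈ ℝ^p and γ ≥ 0 be such that ‖U(β₀)‖_∞ ≤ γ, ‖U(β̂)‖_∞ ≤ γ, and ‖β̂‖₁ ≤ ‖β₀‖₁. Then, with h := β̂ − β₀, h ᵀJ(β₀)h ≤ 4γ‖β₀‖₁ exp(4K₁‖β₀‖₁). -/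
open Matrix Finset

/-! Write `h = β̂ - β₀` and `v k = z k ⬝ᵥ h`. For each event `i`, the `i`-th summand of
`hᵀ J(β₀) h` is the variance of `v` under the weights `exp (z k ⬝ᵥ β₀)` on `R i`, and the
`i`-th summand of `hᵀ (U(β₀) - U(β̂))` is the shift of the mean of `v` when these weights are
tilted by `exp (v k)`. Both are double sums over pairs `k, l`, and
`(x - y)² ≤ e^M (eˣ - eʸ) (x - y)` for `x, y ≥ -M` bounds the variance by `e^{2M}` times the
shift, where `M = 2 K₁ ‖β₀‖₁ ≥ |v k|`. Summed over `i`, the shift is at most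
`‖h‖₁ ‖U(β₀) - U(β̂)‖_∞ ≤ 2γ ‖h‖₁ ≤ 4γ ‖β₀‖₁`. -/

open Real

theorem Real.sq_sub_le_exp_mul_exp_sub_mul_sub {M x y : ℝ} (hx : -M ≤ x) (hy : -M ≤ y) :
    (x - y) ^ 2 ≤ exp M * ((exp x - exp y) * (x - y)) := by
  wlog hxy : y ≤ x generalizing x y
  · have := this hy hx (le_of_not_ge hxy)
    linarith
  have hexp : exp y * (x - y) ≤ exp x - exp y := by
    have := mul_le_mul_of_nonneg_left (add_one_le_exp (x - y)) (exp_pos y).le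
    rw [← exp_add, add_sub_cancel] at this
    linarith
  have hy' : 1 ≤ exp M * exp y := by
    rw [← exp_add, one_le_exp_iff]
    linarith
  calc (x - y) ^ 2 ≤ exp M * exp y * (x - y) * (x - y) := by nlinarith
    _ ≤ exp M * ((exp x - exp y) * (x - y)) := by
      rw [mul_assoc (exp M), mul_assoc, mul_assoc, ← mul_assoc (exp y)]
      gcongr

theorem Finset.sum_sum_mul_sub_mul_sub {ι : Type*} (s : Finset ι) (w f g : ι → ℝ) :
    ∑ k ∈ s, ∑ l ∈ s, w k * w l * ((f k - f l) * (g k - g l)) =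
      2 * ((∑ k ∈ s, w k) * ∑ k ∈ s, w k * f k * g k -
        (∑ k ∈ s, w k * f k) * ∑ k ∈ s, w k * g k) := by
  have expand : ∀ k l, w k * w l * ((f k - f l) * (g k - g l)) =
      w k * f k * g k * w l + w k * (w l * f l * g l) -
        w k * f k * (w l * g l) - w k * g k * (w l * f l) := fun k l => by ring
  simp only [expand, Finset.sum_add_distrib, Finset.sum_sub_distrib, ← Finset.sum_mul_sum]
  ring

theorem Finset.centerMass_eq_sum_mul_div {ι : Type*} (s : Finset ι) (w f : ι → ℝ) :
    s.centerMass w f = (∑ k ∈ s, w k * f k) / ∑ k ∈ s, w k := by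
  simp [Finset.centerMass, div_eq_inv_mul]

theorem Finset.sum_mul_sum_sub_sq_le_exp_mul {ι : Type*} (s : Finset ι) {w v : ι → ℝ} {M : ℝ}
    (hw : ∀ k ∈ s, 0 ≤ w k) (hv : ∀ k ∈ s, -M ≤ v k) :
    (∑ k ∈ s, w k) * ∑ k ∈ s, w k * v k * v k - (∑ k ∈ s, w k * v k) * ∑ k ∈ s, w k * v k ≤
      exp M * ((∑ k ∈ s, w k) * ∑ k ∈ s, w k * exp (v k) * v k -
        (∑ k ∈ s, w k * exp (v k)) * ∑ k ∈ s, w k * v k) := by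
  have hpair : ∀ k ∈ s, ∀ l ∈ s, w k * w l * ((v k - v l) * (v k - v l)) ≤
      exp M * (w k * w l * ((exp (v k) - exp (v l)) * (v k - v l))) := fun k hk l hl => by
    have := sq_sub_le_exp_mul_exp_sub_mul_sub (hv k hk) (hv l hl)
    calc w k * w l * ((v k - v l) * (v k - v l)) = w k * w l * (v k - v l) ^ 2 := by ring
      _ ≤ w k * w l * (exp M * ((exp (v k) - exp (v l)) * (v k - v l))) := by
        gcongr
        exact mul_nonneg (hw k hk) (hw l hl)
      _ = _ := by ring
  have := Finset.sum_le_sum fun k hk => Finset.sum_le_sum fun l hl => hpair k hk l hl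
  simp only [← Finset.mul_sum, Finset.sum_sum_mul_sub_mul_sub] at this
  linarith

theorem Finset.centerMass_sq_sub_sq_le_exp_mul {ι : Type*} {s : Finset ι} (hs : s.Nonempty)
    {w v : ι → ℝ} {M : ℝ} (hw : ∀ k ∈ s, 0 < w k) (hv : ∀ k ∈ s, |v k| ≤ M) :
    s.centerMass w (fun k => v k ^ 2) - s.centerMass w v ^ 2 ≤
      exp (2 * M) * (s.centerMass (fun k => w k * exp (v k)) v - s.centerMass w v) := by
  have hle := s.sum_mul_sum_sub_sq_le_exp_mul (fun k hk => (hw k hk).le)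
    (fun k hk => (abs_le.1 (hv k hk)).1)
  have hvar := s.sum_sum_mul_sub_mul_sub w v v
  set A := ∑ k ∈ s, w k
  set B := ∑ k ∈ s, w k * exp (v k)
  set S₁ := ∑ k ∈ s, w k * v k
  set S₂ := ∑ k ∈ s, w k * v k * v k
  set T := ∑ k ∈ s, w k * exp (v k) * v k
  have hA : 0 < A := Finset.sum_pos hw hs
  have hB : 0 < B := Finset.sum_pos (fun k hk => mul_pos (hw k hk) (exp_pos _)) hs
  have hBA : B ≤ exp M * A := by
    rw [Finset.mul_sum]
    refine Finset.sum_le_sum fun k hk => ?_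
    rw [mul_comm (exp M)]
    exact mul_le_mul_of_nonneg_left (exp_le_exp.2 (abs_le.1 (hv k hk)).2) (hw k hk).le
  have hvar_nonneg : 0 ≤ A * S₂ - S₁ * S₁ := by
    have : 0 ≤ ∑ k ∈ s, ∑ l ∈ s, w k * w l * ((v k - v l) * (v k - v l)) :=
      Finset.sum_nonneg fun k hk => Finset.sum_nonneg fun l hl =>
        mul_nonneg (mul_pos (hw k hk) (hw l hl)).le (mul_self_nonneg _)
    linarith
  have htilt_nonneg : 0 ≤ T / B - S₁ / A := by
    rw [div_sub_div _ _ hB.ne' hA.ne']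
    refine div_nonneg ?_ (by positivity)
    nlinarith [exp_pos M]
  have hS₂ : ∑ k ∈ s, w k * v k ^ 2 = S₂ := by simp only [S₂, sq, mul_assoc]
  simp only [Finset.centerMass_eq_sum_mul_div, hS₂]
  calc S₂ / A - (S₁ / A) ^ 2 = (A * S₂ - S₁ * S₁) / A ^ 2 := by field_simp
    _ ≤ exp M * (A * T - B * S₁) / A ^ 2 := by gcongr
    _ = exp M * (B / A) * (T / B - S₁ / A) := by field_simp
    _ ≤ exp M * exp M * (T / B - S₁ / A) := by
      gcongr
      exact (div_le_iff₀ hA).2 hBA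
    _ = exp (2 * M) * (T / B - S₁ / A) := by rw [two_mul, exp_add]

theorem l1_sub_le {p : ℕ} (x y : Fin p → ℝ) : l1 (x - y) ≤ l1 x + l1 y := by
  simp only [l1, ← Finset.sum_add_distrib]
  exact Finset.sum_le_sum fun j _ => abs_sub (x j) (y j)

theorem abs_le_linf {p : ℕ} (x : Fin p → ℝ) (j : Fin p) : |x j| ≤ linf x :=
  le_ciSup (f := fun j => |x j|) (Finite.bddAbove_range _) j

theorem abs_dotProduct_le_mul_l1 {p : ℕ} {x : Fin p → ℝ} {c : ℝ} (hx : ∀ j, |x j| ≤ c)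
    (y : Fin p → ℝ) : |x ⬝ᵥ y| ≤ c * l1 y := by
  rw [l1, Finset.mul_sum]
  refine (Finset.abs_sum_le_sum_abs _ _).trans (Finset.sum_le_sum fun j _ => ?_)
  rw [abs_mul]
  exact mul_le_mul_of_nonneg_right (hx j) (abs_nonneg _)

theorem dotProduct_sub_le_of_linf_le {p : ℕ} (h : Fin p → ℝ) {x y : Fin p → ℝ} {γ : ℝ}
    (hx : linf x ≤ γ) (hy : linf y ≤ γ) : h ⬝ᵥ (x - y) ≤ 2 * γ * l1 h := by
  rw [dotProduct_comm]
  refine (le_abs_self _).trans (abs_dotProduct_le_mul_l1 (fun j => ?_) h)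
  rw [Pi.sub_apply]
  linarith [abs_sub (x j) (y j), abs_le_linf x j, abs_le_linf y j]

section QuadForm
variable {p : ℕ} (h : Fin p → ℝ)

theorem quad_vecMulVec (a b : Fin p → ℝ) :
    quad (vecMulVec a b) h = (a ⬝ᵥ h) * (b ⬝ᵥ h) := by
  rw [quad, vecMulVec_mulVec]
  simp [dotProduct_comm, mul_comm]

theorem dotProduct_centerMass {ι : Type*} (s : Finset ι) (w : ι → ℝ) (x : ι → Fin p → ℝ) :
    s.centerMass w x ⬝ᵥ h = s.centerMass w (fun k => x k ⬝ᵥ h) := by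
  simp [Finset.centerMass, sum_dotProduct, smul_dotProduct]

theorem quad_centerMass {ι : Type*} (s : Finset ι) (w : ι → ℝ)
    (M : ι → Matrix (Fin p) (Fin p) ℝ) :
    quad (s.centerMass w M) h = s.centerMass w (fun k => quad (M k) h) := by
  simp [Finset.centerMass, quad, Matrix.sum_mulVec, Matrix.smul_mulVec, dotProduct_sum,
    dotProduct_smul]

theorem quad_smul (c : ℝ) (M : Matrix (Fin p) (Fin p) ℝ) :
    quad (c • M) h = c * quad M h := by
  simp [quad, Matrix.smul_mulVec]

theorem quad_sum {ι : Type*} (s : Finset ι) (M : ι → Matrix (Fin p) (Fin p) ℝ) :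
    quad (∑ i ∈ s, M i) h = ∑ i ∈ s, quad (M i) h := by
  simp [quad, Matrix.sum_mulVec, dotProduct_sum]

theorem quad_sub (M N : Matrix (Fin p) (Fin p) ℝ) :
    quad (M - N) h = quad M h - quad N h := by
  simp [quad, Matrix.sub_mulVec, dotProduct_sub]

end QuadForm

section Cox
variable {n p : ℕ} (z : Fin n → Fin p → ℝ) (D : Finset (Fin n)) (R : Fin n → Finset (Fin n))

theorem coxU_eq (β : Fin p → ℝ) :
    coxU z D R β = (n : ℝ)⁻¹ • ∑ i ∈ D, (z i - (R i).centerMass (fun k => exp (z k ⬝ᵥ β)) z) := by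
  ext j
  simp [coxU, coxS0, Finset.centerMass, Finset.sum_apply, div_eq_inv_mul, Finset.mul_sum]

theorem coxJ_eq (β : Fin p → ℝ) :
    coxJ z D R β = (n : ℝ)⁻¹ • ∑ i ∈ D,
      ((R i).centerMass (fun k => exp (z k ⬝ᵥ β)) (fun k => vecMulVec (z k) (z k)) -
        vecMulVec ((R i).centerMass (fun k => exp (z k ⬝ᵥ β)) z)
          ((R i).centerMass (fun k => exp (z k ⬝ᵥ β)) z)) := by
  ext a b
  simp only [coxJ, coxS0, Matrix.smul_apply, Matrix.sum_apply, Matrix.sub_apply, Finset.centerMass,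
    vecMulVec_apply, Finset.sum_apply, Pi.smul_apply, smul_eq_mul]
  congr 1
  refine Finset.sum_congr rfl fun i _ => ?_
  simp only [div_eq_inv_mul, Finset.mul_sum, mul_assoc]

theorem quad_coxJ (β h : Fin p → ℝ) :
    quad (coxJ z D R β) h = (n : ℝ)⁻¹ * ∑ i ∈ D,
      ((R i).centerMass (fun k => exp (z k ⬝ᵥ β)) (fun k => (z k ⬝ᵥ h) ^ 2) -
        (R i).centerMass (fun k => exp (z k ⬝ᵥ β)) (fun k => z k ⬝ᵥ h) ^ 2) := by
  simp only [coxJ_eq, quad_smul, quad_sum, quad_sub, quad_centerMass, quad_vecMulVec,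
    dotProduct_centerMass, sq]

theorem dotProduct_coxU_sub (β β' h : Fin p → ℝ) :
    h ⬝ᵥ (coxU z D R β - coxU z D R β') = (n : ℝ)⁻¹ * ∑ i ∈ D,
      ((R i).centerMass (fun k => exp (z k ⬝ᵥ β')) (fun k => z k ⬝ᵥ h) -
        (R i).centerMass (fun k => exp (z k ⬝ᵥ β)) (fun k => z k ⬝ᵥ h)) := by
  rw [coxU_eq, coxU_eq, ← smul_sub, ← Finset.sum_sub_distrib, dotProduct_comm]
  simp only [smul_dotProduct, sum_dotProduct, sub_dotProduct, dotProduct_centerMass, smul_eq_mul]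
  congr 1
  exact Finset.sum_congr rfl fun i _ => by ring

theorem quad_coxJ_le_exp_mul_dotProduct_coxU_sub (hR : ∀ i ∈ D, (R i).Nonempty)
    (β h : Fin p → ℝ) {M : ℝ} (hM : ∀ i ∈ D, ∀ k ∈ R i, |z k ⬝ᵥ h| ≤ M) :
    quad (coxJ z D R β) h ≤ exp (2 * M) * (h ⬝ᵥ (coxU z D R β - coxU z D R (β + h))) := by
  rw [quad_coxJ, dotProduct_coxU_sub, mul_left_comm]
  gcongr
  rw [Finset.mul_sum]
  gcongr with i hi
  simp only [dotProduct_add, exp_add]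
  exact Finset.centerMass_sq_sub_sq_le_exp_mul (hR i hi) (fun k _ => exp_pos _) (hM i hi)

end Cox

/-- If `‖U(β₀)‖_∞ ≤ γ`, `‖U(β̂)‖_∞ ≤ γ` and `‖β̂‖₁ ≤ ‖β₀‖₁`, then with
`h = β̂ − β₀` one has `hᵀJ(β₀)h ≤ 4γ‖β₀‖₁ exp(4K₁‖β₀‖₁)`. -/
theorem stmt7 {n p : ℕ} (z : Fin n → Fin p → ℝ) (D : Finset (Fin n))
    (R : Fin n → Finset (Fin n)) (hR : ∀ i ∈ D, (R i).Nonempty)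
    (K₁ : ℝ) (hz : ∀ i j, |z i j| ≤ K₁)
    (β₀ βhat : Fin p → ℝ) (γ : ℝ) (hγ : 0 ≤ γ)
    (hU0 : linf (coxU z D R β₀) ≤ γ) (hUhat : linf (coxU z D R βhat) ≤ γ)
    (hl1 : l1 βhat ≤ l1 β₀) :
    quad (coxJ z D R β₀) (βhat - β₀) ≤ 4 * γ * l1 β₀ * Real.exp (4 * K₁ * l1 β₀) := by
  set h := βhat - β₀
  have hl1h : l1 h ≤ 2 * l1 β₀ := by linarith [l1_sub_le βhat β₀]
  have hzh : ∀ k, |z k ⬝ᵥ h| ≤ 2 * K₁ * l1 β₀ := by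
    intro k
    -- `K₁` can only be negative when there are no covariates.
    rcases isEmpty_or_nonempty (Fin p) with hp | ⟨⟨j⟩⟩
    · simp [dotProduct, l1]
    · calc |z k ⬝ᵥ h| ≤ K₁ * l1 h := abs_dotProduct_le_mul_l1 (hz k) h
        _ ≤ K₁ * (2 * l1 β₀) := by
          gcongr
          exact (abs_nonneg _).trans (hz k j)
        _ = 2 * K₁ * l1 β₀ := by ring
  have hJ := quad_coxJ_le_exp_mul_dotProduct_coxU_sub z D R hR β₀ h fun _ _ k _ => hzh k
  rw [add_sub_cancel] at hJ
  calc quad (coxJ z D R β₀) h ≤ exp (2 * (2 * K₁ * l1 β₀)) * (2 * γ * l1 h) :=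
        hJ.trans (by gcongr; exact dotProduct_sub_le_of_linf_le h hU0 hUhat)
    _ ≤ exp (4 * K₁ * l1 β₀) * (2 * γ * (2 * l1 β₀)) := by
        rw [show 2 * (2 * K₁ * l1 β₀) = 4 * K₁ * l1 β₀ by ring]
        gcongr
    _ = 4 * γ * l1 β₀ * exp (4 * K₁ * l1 β₀) := by ring
end
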